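/- arXiv:1606.07240 — 11 statements merged into one kernel-verified Lean document; each statement's English description precedes it below -/
import Mathlib

section
/- The Gibbs risk decomposes as half the expected disagreement plus the expected joint error: R_D(G_Q) = (1/2) d_D(Q) + e_D(Q). -/
/-!
Fix `(x, y)` and write `r h = 1[h x ≠ y]`. Since labels are binary,
`1[h x ≠ h' x] = r h + r h' - 2 r h r h'`, so averaging over `Q²` gives disagreement
`2 S - 2 S²` and joint error `S²`, where `S = ∑ Q r` is the Gibbs risk at `(x, y)`.
Integrating over `D` finishes the proof.
-/

theorem ite_eq_zero_one_eq_add_sub_of_mem_pair {α : Type*} [DecidableEq α] {p q a b y : α}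
    (ha : a = p ∨ a = q) (hb : b = p ∨ b = q) (hy : y = p ∨ y = q) :
    (if a = b then 0 else 1 : ℝ) =
      (if a = y then 0 else 1) + (if b = y then 0 else 1) -
        2 * ((if a = y then 0 else 1) * (if b = y then 0 else 1)) := by
  by_cases hpq : p = q
  · subst hpq
    simp only [or_self] at ha hb hy
    simp [ha, hb, hy]
  · rcases ha with rfl | rfl <;> rcases hb with rfl | rfl <;> rcases hy with rfl | rfl <;>
      simp [hpq, Ne.symm hpq] <;> norm_num

theorem sum_sum_mul_mul_mul_eq_sq {H : Type*} [Fintype H] (Q r : H → ℝ) :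
    ∑ h, ∑ h', Q h * Q h' * (r h * r h') = (∑ h, Q h * r h) ^ 2 := by
  rw [sq, Finset.sum_mul_sum]
  simp only [mul_mul_mul_comm]

theorem pointwise_gibbs_risk_eq_half_disagreement_add_joint_error {H : Type*} [Fintype H]
    (Q : H → ℝ) (hQ1 : ∑ h, Q h = 1) (r : H → ℝ) (d : H → H → ℝ)
    (hd : ∀ h h', d h h' = r h + r h' - 2 * (r h * r h')) :
    ∑ h, Q h * r h =
      1 / 2 * ∑ h, ∑ h', Q h * Q h' * d h h' + ∑ h, ∑ h', Q h * Q h' * (r h * r h') := by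
  have hexpand : ∀ h h', Q h * Q h' * d h h' =
      Q h * r h * Q h' + Q h * (Q h' * r h') - 2 * (Q h * Q h' * (r h * r h')) := by
    intro h h'
    rw [hd]
    ring
  simp only [hexpand, Finset.sum_add_distrib, Finset.sum_sub_distrib, ← Finset.mul_sum,
    ← Finset.sum_mul, hQ1, sum_sum_mul_mul_mul_eq_sq]
  ring

theorem gibbs_risk_eq_half_disagreement_add_joint_error_general
    {X H : Type*} [Fintype X] [Fintype H]
    (v : H → X → ℝ) (hv : ∀ h x, v h x = 1 ∨ v h x = -1)
    (Q : H → ℝ) (hQ1 : ∑ h, Q h = 1)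
    (D : X × Bool → ℝ) :
    -- R_D(G_Q)
    (∑ z : X × Bool, D z *
        ∑ h, Q h * (if v h z.1 = (if z.2 then (1 : ℝ) else -1) then 0 else 1))
    =
    -- (1/2) d_D(Q)
    (1 / 2) * (∑ z : X × Bool, D z *
        ∑ h, ∑ h', Q h * Q h' * (if v h z.1 = v h' z.1 then 0 else 1))
    +
    -- e_D(Q)
    (∑ z : X × Bool, D z *
        ∑ h, ∑ h', Q h * Q h' *
          ((if v h z.1 = (if z.2 then (1 : ℝ) else -1) then 0 else 1) *
           (if v h' z.1 = (if z.2 then (1 : ℝ) else -1) then 0 else 1))) := by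
  have hlabel : ∀ b : Bool,
      (if b then (1 : ℝ) else -1) = 1 ∨ (if b then (1 : ℝ) else -1) = -1 := by
    intro b
    cases b <;> simp
  rw [Finset.mul_sum, ← Finset.sum_add_distrib]
  refine Finset.sum_congr rfl fun z _ => ?_
  rw [pointwise_gibbs_risk_eq_half_disagreement_add_joint_error Q hQ1 _ _ fun h h' =>
    ite_eq_zero_one_eq_add_sub_of_mem_pair (hv h z.1) (hv h' z.1) (hlabel z.2)]
  ring

/-- The Gibbs risk decomposes as half the expected disagreement plus the
expected joint error: `R_D(G_Q) = (1/2) d_D(Q) + e_D(Q)`. Labels are `Bool`,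
with `true ↦ 1` and `false ↦ -1`. -/
theorem gibbs_risk_eq_half_disagreement_add_joint_error
    {X H : Type*} [Fintype X] [Fintype H]
    (v : H → X → ℝ) (hv : ∀ h x, v h x = 1 ∨ v h x = -1)
    (Q : H → ℝ) (hQ0 : ∀ h, 0 ≤ Q h) (hQ1 : ∑ h, Q h = 1)
    (D : X × Bool → ℝ) (hD0 : ∀ z, 0 ≤ D z) (hD1 : ∑ z, D z = 1) :
    -- R_D(G_Q)
    (∑ z : X × Bool, D z *
        ∑ h, Q h * (if v h z.1 = (if z.2 then (1 : ℝ) else -1) then 0 else 1))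
    =
    -- (1/2) d_D(Q)
    (1 / 2) * (∑ z : X × Bool, D z *
        ∑ h, ∑ h', Q h * Q h' * (if v h z.1 = v h' z.1 then 0 else 1))
    +
    -- e_D(Q)
    (∑ z : X × Bool, D z *
        ∑ h, ∑ h', Q h * Q h' *
          ((if v h z.1 = (if z.2 then (1 : ℝ) else -1) then 0 else 1) *
           (if v h' z.1 = (if z.2 then (1 : ℝ) else -1) then 0 else 1))) :=
  gibbs_risk_eq_half_disagreement_add_joint_error_general v hv Q hQ1 D
end

section
/- The C-bound: if R_D(G_Q) < 1/2 then the majority vote risk satisfies R_D(B_Q) ≤ 1 − (1 − 2 R_D(G_Q))² / (1 − 2 d_D(Q)). -/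
/-- The C-bound: if `R_D(G_Q) < 1/2` then
`R_D(B_Q) ≤ 1 − (1 − 2 R_D(G_Q))² / (1 − 2 d_D(Q))`, where, in terms of the
margin `M_Q(x,y) = y · E_{h∼Q} h(x)`, we have `R_D(B_Q) = P(M_Q ≤ 0)`,
`R_D(G_Q) = (1 − E[M_Q])/2` and `d_D(Q) = (1 − E[M_Q²])/2`.
Labels are `Bool`, with `true ↦ 1` and `false ↦ -1`. -/
theorem c_bound
    {X H : Type*} [Fintype X] [Fintype H]
    (v : H → X → ℝ) (hv : ∀ h x, v h x = 1 ∨ v h x = -1)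
    (Q : H → ℝ) (hQ0 : ∀ h, 0 ≤ Q h) (hQ1 : ∑ h, Q h = 1)
    (D : X × Bool → ℝ) (hD0 : ∀ z, 0 ≤ D z) (hD1 : ∑ z, D z = 1) :
    let M : X × Bool → ℝ := fun z => (if z.2 then (1 : ℝ) else -1) * ∑ h, Q h * v h z.1
    let RG : ℝ := (1 - ∑ z, D z * M z) / 2          -- Gibbs risk R_D(G_Q)
    let dQ : ℝ := (1 - ∑ z, D z * (M z) ^ 2) / 2    -- expected disagreement d_D(Q)
    RG < 1 / 2 →
      (∑ z, D z * (if M z ≤ 0 then 1 else 0))       -- majority-vote risk R_D(B_Q)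
        ≤ 1 - (1 - 2 * RG) ^ 2 / (1 - 2 * dQ) := by
  intro M RG dQ hRG
  set μ : ℝ := ∑ z, D z * M z with hμdef
  set S2 : ℝ := ∑ z, D z * (M z) ^ 2 with hS2def
  have hμ : 0 < μ := by
    have : (1 - μ) / 2 < 1 / 2 := hRG
    linarith
  set P : ℝ := ∑ z, D z * (if 0 < M z then 1 else 0) with hPdef
  have hP0 : 0 ≤ P := Finset.sum_nonneg fun z _ => by
    have := hD0 z; by_cases h : 0 < M z <;> simp [h] <;> nlinarith
  have hP1 : P ≤ 1 := by
    rw [← hD1]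
    refine Finset.sum_le_sum fun z _ => ?_
    have := hD0 z; by_cases h : 0 < M z <;> simp [h] <;> nlinarith
  have hkey : μ ≤ ∑ z, D z * (if 0 < M z then M z else 0) := by
    refine Finset.sum_le_sum fun z _ => ?_
    have := hD0 z; by_cases h : 0 < M z <;> simp [h] <;> nlinarith
  -- Cauchy–Schwarz
  have hCS : (∑ z, D z * (if 0 < M z then M z else 0)) ^ 2
      ≤ (∑ z, D z * (if 0 < M z then (M z) ^ 2 else 0)) * P := by
    refine Finset.sum_sq_le_sum_mul_sum_of_sq_eq_mul Finset.univ
      (f := fun z => D z * (if 0 < M z then (M z) ^ 2 else 0))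
      (g := fun z => D z * (if 0 < M z then 1 else 0))
      (fun z _ => by have := hD0 z; by_cases h : 0 < M z <;> simp [h] <;> nlinarith)
      (fun z _ => by have := hD0 z; by_cases h : 0 < M z <;> simp [h] <;> nlinarith)
      (fun z _ => by by_cases h : 0 < M z <;> simp [h] <;> ring)
  have hfS2 : (∑ z, D z * (if 0 < M z then (M z) ^ 2 else 0)) ≤ S2 := by
    refine Finset.sum_le_sum fun z _ => ?_
    have := hD0 z; by_cases h : 0 < M z <;> simp [h] <;> nlinarith [sq_nonneg (M z)]
  have hμ2 : μ ^ 2 ≤ S2 * P := by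
    calc μ ^ 2 ≤ (∑ z, D z * (if 0 < M z then M z else 0)) ^ 2 := by
          have h0 : (0:ℝ) ≤ μ := hμ.le
          nlinarith
      _ ≤ (∑ z, D z * (if 0 < M z then (M z) ^ 2 else 0)) * P := hCS
      _ ≤ S2 * P := mul_le_mul_of_nonneg_right hfS2 hP0
  have hS2nn : 0 ≤ S2 := Finset.sum_nonneg fun z _ => by
    have := hD0 z; positivity
  have hS2 : 0 < S2 := by nlinarith
  have hLHS : (∑ z, D z * (if M z ≤ 0 then 1 else 0)) = 1 - P := by
    have hsum : (∑ z, D z * (if M z ≤ 0 then 1 else 0)) + P = 1 := by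
      calc (∑ z, D z * (if M z ≤ 0 then 1 else 0)) + P
          = ∑ z, (D z * (if M z ≤ 0 then 1 else 0) + D z * (if 0 < M z then 1 else 0)) := by
            rw [Finset.sum_add_distrib]
        _ = ∑ z, D z := Finset.sum_congr rfl fun z _ => by
            by_cases h : 0 < M z
            · simp [h, not_le.mpr h]
            · simp [h, not_lt.mp h]
        _ = 1 := hD1
    linarith
  have hRGμ : 1 - 2 * RG = μ := by show 1 - 2 * ((1 - μ) / 2) = μ; ring
  have hdQS : 1 - 2 * dQ = S2 := by show 1 - 2 * ((1 - S2) / 2) = S2; ring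
  rw [hLHS, hRGμ, hdQS]
  have : μ ^ 2 / S2 ≤ P := (div_le_iff₀ hS2).mpr (by linarith [hμ2])
  linarith
end

section
/- Hierarchical (two-level) change of measure inequality: E_{v∼ρ} E_{h∼Q_v} φ(h) ≤ E_{v∼ρ} KL(Q_v ‖ P_v) + KL(ρ ‖ π) + ln( E_{v∼π} E_{h∼P_v} e^{φ(h)} ). -/
open Finset Real

/-- One-level change of measure (Donsker–Varadhan, finite case). -/
lemma one_level_com {ι : Type*} [Fintype ι] (w p f : ι → ℝ)
    (hw0 : ∀ i, 0 ≤ w i) (hw1 : ∑ i, w i = 1)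
    (hp0 : ∀ i, 0 ≤ p i) (hp1 : ∑ i, p i = 1)
    (hpw : ∀ i, p i = 0 → w i = 0) :
    ∑ i, w i * f i
      ≤ ∑ i, w i * Real.log (w i / p i) + Real.log (∑ i, p i * Real.exp (f i)) := by
  set S : ℝ := ∑ i, p i * Real.exp (f i) with hS
  have hSpos : 0 < S := by
    obtain ⟨i, hi⟩ : ∃ i, 0 < p i := by
      by_contra hcon
      push_neg at hcon
      have : ∑ i, p i = 0 := by
        apply Finset.sum_eq_zero
        intro i _
        exact le_antisymm (hcon i) (hp0 i)
      simp [this] at hp1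
    have : 0 < p i * Real.exp (f i) := mul_pos hi (Real.exp_pos _)
    refine lt_of_lt_of_le this ?_
    exact Finset.single_le_sum (fun j _ => mul_nonneg (hp0 j) (Real.exp_pos _).le)
      (Finset.mem_univ i)
  -- termwise bound
  have key : ∀ i, w i * f i - w i * Real.log (w i / p i) - w i * Real.log S
      ≤ p i * Real.exp (f i) / S - w i := by
    intro i
    rcases eq_or_lt_of_le (hw0 i) with hw | hw
    · rw [← hw]
      simp only [zero_mul, sub_zero, zero_sub, sub_self]
      exact div_nonneg (mul_nonneg (hp0 i) (Real.exp_pos _).le) hSpos.le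
    · have hpi : 0 < p i := by
        rcases eq_or_lt_of_le (hp0 i) with hp | hp
        · exact absurd (hpw i hp.symm) (ne_of_gt hw)
        · exact hp
      have hx : 0 < p i * Real.exp (f i) / (w i * S) := by positivity
      have hlog := Real.log_le_sub_one_of_pos hx
      have hexpand : Real.log (p i * Real.exp (f i) / (w i * S))
          = Real.log (p i) + f i - Real.log (w i) - Real.log S := by
        rw [Real.log_div (by positivity) (by positivity),
          Real.log_mul (ne_of_gt hpi) (Real.exp_ne_zero _),
          Real.log_mul (ne_of_gt hw) (ne_of_gt hSpos), Real.log_exp]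
        ring
      have hmul := mul_le_mul_of_nonneg_left hlog (hw0 i)
      rw [hexpand] at hmul
      have hdivlog : Real.log (w i / p i) = Real.log (w i) - Real.log (p i) :=
        Real.log_div (ne_of_gt hw) (ne_of_gt hpi)
      have hw' : w i * (p i * Real.exp (f i) / (w i * S) - 1)
          = p i * Real.exp (f i) / S - w i := by
        field_simp
      calc w i * f i - w i * Real.log (w i / p i) - w i * Real.log S
          = w i * (Real.log (p i) + f i - Real.log (w i) - Real.log S) := by
            rw [hdivlog]; ring
        _ ≤ w i * (p i * Real.exp (f i) / (w i * S) - 1) := hmul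
        _ = p i * Real.exp (f i) / S - w i := hw'
  have hsum := Finset.sum_le_sum (fun i (_ : i ∈ Finset.univ) => key i)
  have h2 : ∑ i, (p i * Real.exp (f i) / S - w i) = 0 := by
    rw [Finset.sum_sub_distrib, ← Finset.sum_div, ← hS, div_self (ne_of_gt hSpos), hw1]
    ring
  have h1 : ∑ i, (w i * f i - w i * Real.log (w i / p i) - w i * Real.log S)
      = ∑ i, w i * f i - ∑ i, w i * Real.log (w i / p i) - Real.log S := by
    rw [Finset.sum_sub_distrib, Finset.sum_sub_distrib, ← Finset.sum_mul, hw1, one_mul]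
  rw [h1, h2] at hsum
  linarith

/-- Hierarchical (two-level) change of measure inequality:
`E_{v∼ρ} E_{h∼Q_v} φ(h) ≤ E_{v∼ρ} KL(Q_v‖P_v) + KL(ρ‖π) + ln(E_{v∼π} E_{h∼P_v} e^{φ(h)})`.
The view-specific voter sets are modeled as distributions `P v, Q v` on a common
finite set `H` (containing `⋃_v H_v`). -/
theorem hierarchical_change_of_measure
    {V H : Type*} [Fintype V] [Fintype H] [Nonempty V] [Nonempty H]
    (P Q : V → H → ℝ)
    (hP0 : ∀ v h, 0 ≤ P v h) (hP1 : ∀ v, ∑ h, P v h = 1)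
    (hQ0 : ∀ v h, 0 ≤ Q v h) (hQ1 : ∀ v, ∑ h, Q v h = 1)
    (hQP : ∀ v h, P v h = 0 → Q v h = 0)
    (pi rho : V → ℝ)
    (hpi0 : ∀ v, 0 ≤ pi v) (hpi1 : ∑ v, pi v = 1)
    (hrho0 : ∀ v, 0 ≤ rho v) (hrho1 : ∑ v, rho v = 1)
    (hrp : ∀ v, pi v = 0 → rho v = 0)
    (φ : H → ℝ) :
    ∑ v, rho v * ∑ h, Q v h * φ h
      ≤ (∑ v, rho v * ∑ h, Q v h * Real.log (Q v h / P v h))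
        + (∑ v, rho v * Real.log (rho v / pi v))
        + Real.log (∑ v, pi v * ∑ h, P v h * Real.exp (φ h)) := by
  have main := one_level_com (ι := V × H)
    (fun x => rho x.1 * Q x.1 x.2) (fun x => pi x.1 * P x.1 x.2) (fun x => φ x.2)
    (fun x => mul_nonneg (hrho0 x.1) (hQ0 x.1 x.2))
    (by
      rw [Fintype.sum_prod_type]
      simp_rw [← Finset.mul_sum, hQ1]
      simpa using hrho1)
    (fun x => mul_nonneg (hpi0 x.1) (hP0 x.1 x.2))
    (by
      rw [Fintype.sum_prod_type]
      simp_rw [← Finset.mul_sum, hP1]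
      simpa using hpi1)
    (by
      rintro ⟨v, h⟩ hx
      rcases mul_eq_zero.mp hx with hpiv | hPvh
      · simp [hrp v hpiv]
      · simp [hQP v h hPvh])
  rw [Fintype.sum_prod_type, Fintype.sum_prod_type, Fintype.sum_prod_type] at main
  -- rewrite LHS
  have hL : ∀ v, ∑ h, rho v * Q v h * φ h = rho v * ∑ h, Q v h * φ h := by
    intro v; rw [Finset.mul_sum]; exact Finset.sum_congr rfl (fun h _ => by ring)
  simp_rw [hL] at main
  -- rewrite exp term
  have hE : ∀ v, ∑ h, pi v * P v h * Real.exp (φ h)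
      = pi v * ∑ h, P v h * Real.exp (φ h) := by
    intro v; rw [Finset.mul_sum]; exact Finset.sum_congr rfl (fun h _ => by ring)
  simp_rw [hE] at main
  -- chain rule for the KL term
  have hKL : ∀ v, ∑ h, rho v * Q v h * Real.log (rho v * Q v h / (pi v * P v h))
      = rho v * ∑ h, Q v h * Real.log (Q v h / P v h)
        + rho v * Real.log (rho v / pi v) := by
    intro v
    rcases eq_or_lt_of_le (hrho0 v) with hr | hr
    · simp [← hr]
    · have hpiv : 0 < pi v := by
        rcases eq_or_lt_of_le (hpi0 v) with hp | hp
        · exact absurd (hrp v hp.symm) (ne_of_gt hr)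
        · exact hp
      have term : ∀ h, rho v * Q v h * Real.log (rho v * Q v h / (pi v * P v h))
          = rho v * (Q v h * Real.log (Q v h / P v h))
            + rho v * Q v h * Real.log (rho v / pi v) := by
        intro h
        rcases eq_or_lt_of_le (hQ0 v h) with hq | hq
        · simp [← hq]
        · have hPvh : 0 < P v h := by
            rcases eq_or_lt_of_le (hP0 v h) with hp | hp
            · exact absurd (hQP v h hp.symm) (ne_of_gt hq)
            · exact hp
          have : rho v * Q v h / (pi v * P v h) = (rho v / pi v) * (Q v h / P v h) := by
            field_simp
          rw [this, Real.log_mul (by positivity) (by positivity)]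
          ring
      rw [Finset.sum_congr rfl (fun h _ => term h), Finset.sum_add_distrib,
        ← Finset.mul_sum, ← Finset.sum_mul, ← Finset.mul_sum, hQ1]
      ring
  simp_rw [hKL] at main
  rw [Finset.sum_add_distrib] at main
  linarith [main]
end

section
/- For every positive integer m, the sum Σ_{k=0}^{m} C(m,k) (k/m)^k (1 − k/m)^{m−k} is at most 2√m. -/
/-!
Write `n! = s n * √(2n) * (n/e)^n` with the Stirling sequence `s`, which decreases to `√π`.
For `0 < k < m` with `j = m - k`, the exponentials cancel in the `k`-th summand, which becomes
`s m / (s k * s j) * √(2m) / (√(2k) * √(2j)) ≤ (1/√k + 1/√j) / √(2π)`, using `s m ≤ s k`,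
`√π ≤ s j` and `√m ≤ √k + √j`. Summing over `0 < k < m` gives at most
`√(2/π) * (2√(m - 1) - 1)`, and since `√(2/π) ≤ 4/5` the claim reduces to
`3 + 4√(m - 1) ≤ 5√m`, which is Cauchy–Schwarz for `(3, 4)` and `(1, √(m - 1))`.
-/

open Real Finset Stirling
open scoped Nat

theorem Real.sqrt_add_le_add_sqrt (x y : ℝ) : √(x + y) ≤ √x + √y := by
  rw [sqrt_le_left (by positivity), add_sq, sq_sqrt', sq_sqrt']
  nlinarith [le_max_left x 0, le_max_left y 0, mul_nonneg (sqrt_nonneg x) (sqrt_nonneg y)]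

theorem sum_Ico_inv_sqrt_le {n : ℕ} (hn : n ≠ 0) :
    ∑ k ∈ Ico 1 (n + 1), (√k)⁻¹ ≤ 2 * √n - 1 := by
  induction n, Nat.one_le_iff_ne_zero.2 hn using Nat.le_induction with
  | base => norm_num
  | succ n hn ih =>
    rw [sum_Ico_succ_top (by omega), Nat.cast_succ]
    have hstep : (√(n + 1))⁻¹ ≤ 2 * √(n + 1) - 2 * √n := by
      rw [inv_le_iff_one_le_mul₀' (by positivity)]
      nlinarith [sq_sqrt (n.cast_nonneg : (0 : ℝ) ≤ n), sq_sqrt (by positivity : (0 : ℝ) ≤ n + 1),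
        sq_nonneg (√((n : ℝ) + 1) - √n)]
    linarith [ih (by omega)]

theorem three_add_four_mul_sqrt_le {x : ℝ} (hx : 0 ≤ x) : 3 + 4 * √x ≤ 5 * √(x + 1) := by
  rw [← sqrt_sq (by positivity : (0 : ℝ) ≤ 3 + 4 * √x), show (5 : ℝ) = √(5 ^ 2) by simp,
    ← sqrt_mul (by norm_num)]
  gcongr
  nlinarith [sq_sqrt hx, sq_nonneg (3 * √x - 4)]

theorem two_div_sqrt_two_mul_pi_le : 2 / √(2 * π) ≤ 4 / 5 := by
  rw [div_le_div_iff₀ (by positivity) (by norm_num)]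
  have : (5 / 2 : ℝ) ≤ √(2 * π) := le_sqrt_of_sq_le (by nlinarith [pi_gt_d2])
  linarith

namespace Stirling

theorem stirlingSeq_pos {n : ℕ} (hn : n ≠ 0) : 0 < stirlingSeq n :=
  (sqrt_pos.2 pi_pos).trans_le (sqrt_pi_le_stirlingSeq hn)

theorem stirlingSeq_le_of_le {a b : ℕ} (ha : a ≠ 0) (hab : a ≤ b) :
    stirlingSeq b ≤ stirlingSeq a := by
  obtain ⟨a, rfl⟩ := Nat.exists_eq_succ_of_ne_zero ha
  obtain ⟨b, rfl⟩ := Nat.exists_eq_succ_of_ne_zero (by omega : b ≠ 0)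
  exact stirlingSeq'_antitone (Nat.succ_le_succ_iff.mp hab)

theorem factorial_eq_stirlingSeq_mul {n : ℕ} (hn : n ≠ 0) :
    (n ! : ℝ) = stirlingSeq n * (√(2 * n) * (n / exp 1) ^ n) := by
  rw [stirlingSeq, div_mul_cancel₀]
  positivity

end Stirling

theorem choose_mul_pow_mul_pow_eq {k j : ℕ} (hk : k ≠ 0) (hj : j ≠ 0) :
    ((k + j).choose k : ℝ) * (k / (k + j : ℝ)) ^ k * (j / (k + j : ℝ)) ^ j =
      stirlingSeq (k + j) / (stirlingSeq k * stirlingSeq j) *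
        (√(2 * (k + j : ℝ)) / (√(2 * k) * √(2 * j))) := by
  rw [Nat.cast_choose ℝ (Nat.le_add_right k j), Nat.add_sub_cancel_left,
    factorial_eq_stirlingSeq_mul (by omega), factorial_eq_stirlingSeq_mul hk,
    factorial_eq_stirlingSeq_mul hj]
  have := stirlingSeq_pos hk
  have := stirlingSeq_pos hj
  push_cast
  field_simp
  simp only [div_pow, pow_add]
  field_simp

theorem choose_mul_pow_mul_pow_le {k j : ℕ} (hk : k ≠ 0) (hj : j ≠ 0) :
    ((k + j).choose k : ℝ) * (k / (k + j : ℝ)) ^ k * (j / (k + j : ℝ)) ^ j ≤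
      ((√k)⁻¹ + (√j)⁻¹) / √(2 * π) := by
  have hsk := stirlingSeq_pos hk
  have hsj := stirlingSeq_pos hj
  have hratio : stirlingSeq (k + j) / (stirlingSeq k * stirlingSeq j) ≤ (√π)⁻¹ := by
    rw [div_le_iff₀ (by positivity), ← div_eq_inv_mul, le_div_iff₀ (sqrt_pos.2 pi_pos)]
    exact mul_le_mul (stirlingSeq_le_of_le hk (Nat.le_add_right k j))
      (sqrt_pi_le_stirlingSeq hj) (sqrt_nonneg π) hsk.le
  have : (0 : ℝ) < √k := by positivity
  have : (0 : ℝ) < √j := by positivity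
  rw [choose_mul_pow_mul_pow_eq hk hj]
  calc _ ≤ (√π)⁻¹ * (√2 * (√k + √j) / (√2 * √k * (√2 * √j))) := by
        simp only [sqrt_mul zero_le_two, mul_assoc]
        gcongr
        exact sqrt_add_le_add_sqrt _ _
    _ = ((√k)⁻¹ + (√j)⁻¹) / √(2 * π) := by
        rw [sqrt_mul zero_le_two]
        field_simp
        ring

theorem choose_mul_pow_mul_one_sub_pow_le {m k : ℕ} (hk : k ≠ 0) (hkm : k < m) :
    (m.choose k : ℝ) * (k / m) ^ k * (1 - k / m) ^ (m - k) ≤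
      ((√k)⁻¹ + (√(m - k : ℕ))⁻¹) / √(2 * π) := by
  obtain ⟨j, rfl⟩ := Nat.exists_eq_add_of_le hkm.le
  have hj : j ≠ 0 := by omega
  have hkj : (k + j : ℝ) ≠ 0 := by positivity
  rw [Nat.add_sub_cancel_left, Nat.cast_add, one_sub_div hkj, add_sub_cancel_left]
  exact choose_mul_pow_mul_pow_le hk hj

theorem sum_Ico_choose_mul_pow_mul_one_sub_pow_le {n : ℕ} (hn : n ≠ 0) :
    ∑ k ∈ Ico 1 (n + 1),
        ((n + 1).choose k : ℝ) * (k / ↑(n + 1)) ^ k * (1 - k / ↑(n + 1)) ^ (n + 1 - k) ≤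
      2 * (2 * √n - 1) / √(2 * π) :=
  calc _ ≤ ∑ k ∈ Ico 1 (n + 1), ((√k)⁻¹ + (√(n + 1 - k : ℕ))⁻¹) / √(2 * π) :=
        sum_le_sum fun k hk => choose_mul_pow_mul_one_sub_pow_le (by grind) (by grind)
    _ = 2 * (∑ k ∈ Ico 1 (n + 1), (√k)⁻¹) / √(2 * π) := by
        rw [← sum_div, sum_add_distrib,
          sum_Ico_reflect (fun j => (√(j : ℝ))⁻¹) 1 (n + 1).le_succ]
        simp [two_mul]
    _ ≤ 2 * (2 * √n - 1) / √(2 * π) := by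
        gcongr
        exact sum_Ico_inv_sqrt_le hn

/-- For every positive integer `m`,
`Σ_{k=0}^{m} C(m,k) (k/m)^k (1 − k/m)^{m−k} ≤ 2√m`
(with the convention `0^0 = 1`, which is the real-number convention). -/
theorem xi_le_two_sqrt (m : ℕ) (hm : 0 < m) :
    ∑ k ∈ Finset.range (m + 1),
        (m.choose k : ℝ) * ((k : ℝ) / m) ^ k * (1 - (k : ℝ) / m) ^ (m - k)
      ≤ 2 * Real.sqrt m := by
  obtain ⟨n, rfl⟩ := Nat.exists_eq_add_of_le' hm
  rcases eq_or_ne n 0 with rfl | hn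
  · norm_num [sum_range_succ]
  have hinner := sum_Ico_choose_mul_pow_mul_one_sub_pow_le hn
  have hsqrt : 1 ≤ √(n : ℝ) := one_le_sqrt.2 (by exact_mod_cast Nat.one_le_iff_ne_zero.2 hn)
  rw [sum_range_succ, range_eq_Ico, sum_eq_sum_Ico_succ_bot (by omega)]
  calc _ ≤ 2 + 2 * (2 * √n - 1) / √(2 * π) := by
        norm_num [div_self (by positivity : (n + 1 : ℝ) ≠ 0)] at hinner ⊢
        linarith
    _ ≤ 2 + 4 / 5 * (2 * √n - 1) := by
        rw [mul_div_right_comm]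
        gcongr 2 + ?_
        exact mul_le_mul_of_nonneg_right two_div_sqrt_two_mul_pi_le (by linarith)
    _ ≤ 2 * √(n + 1 : ℕ) := by
        push_cast
        linarith [three_add_four_mul_sqrt_le n.cast_nonneg]
end

section
/- Binomial Laplace-transform identity for the kl deviation: if K ∼ Binomial(m, p) with 0 < p < 1, then E[ e^{m·kl(K/m, p)} ] = Σ_{k=0}^{m} C(m,k) (k/m)^k (1 − k/m)^{m−k}, a quantity independent of p. -/
/-!
Since `m·kl(k/m, p) = ln ((k/m)^k (1-k/m)^(m-k)) - ln (p^k (1-p)^(m-k))`, the factor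
`e^{m·kl(k/m, p)}` cancels the binomial weight `p^k (1-p)^(m-k)` term by term and replaces it by
`(k/m)^k (1-k/m)^(m-k)`. At `k = 0` and `k = m` the convention `0·ln 0 = 0` matches `0^0 = 1`.
-/

/-- `kl(a,b) = a ln(a/b) + (1−a) ln((1−a)/(1−b))`, the KL divergence between
Bernoulli distributions, with the conventions `0·ln 0 = 0` and `0·ln(0/0) = 0`. -/
noncomputable def klBer (a b : ℝ) : ℝ :=
  (if a = 0 then 0 else a * Real.log (a / b)) +
  (if a = 1 then 0 else (1 - a) * Real.log ((1 - a) / (1 - b)))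

open Real

noncomputable def klTerm (x y : ℝ) : ℝ :=
  if x = 0 then 0 else x * log (x / y)

lemma klBer_eq_klTerm_add (a b : ℝ) : klBer a b = klTerm a b + klTerm (1 - a) (1 - b) := by
  simp only [klBer, klTerm, sub_eq_zero, eq_comm (a := (1 : ℝ))]

lemma rpow_mul_mul_exp_mul_klTerm {x y : ℝ} (hx : 0 ≤ x) (hy : 0 < y) (s : ℝ) :
    y ^ (s * x) * exp (s * klTerm x y) = x ^ (s * x) := by
  rcases hx.eq_or_lt with rfl | hx
  · simp [klTerm]
  · rw [klTerm, if_neg hx.ne', ← mul_assoc, mul_comm (s * x), ← rpow_def_of_pos (by positivity),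
      ← mul_rpow hy.le (by positivity), mul_div_cancel₀ x hy.ne']

lemma rpow_mul_rpow_mul_exp_mul_klBer {a p : ℝ} (ha0 : 0 ≤ a) (ha1 : a ≤ 1)
    (hp0 : 0 < p) (hp1 : p < 1) (s : ℝ) :
    p ^ (s * a) * (1 - p) ^ (s * (1 - a)) * exp (s * klBer a p)
      = a ^ (s * a) * (1 - a) ^ (s * (1 - a)) := by
  rw [klBer_eq_klTerm_add, mul_add, exp_add,
    ← rpow_mul_mul_exp_mul_klTerm ha0 hp0, ← rpow_mul_mul_exp_mul_klTerm (sub_nonneg.2 ha1)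
      (sub_pos.2 hp1)]
  ring

lemma natCast_mul_div_natCast {k m : ℕ} (hkm : k ≤ m) : (m : ℝ) * (k / m) = k := by
  rcases Nat.eq_zero_or_pos m with rfl | hm
  · simp [Nat.le_zero.1 hkm]
  · field_simp

lemma pow_mul_pow_mul_exp_mul_klBer {k m : ℕ} (hkm : k ≤ m) {p : ℝ} (hp0 : 0 < p) (hp1 : p < 1) :
    p ^ k * (1 - p) ^ (m - k) * exp (m * klBer ((k : ℝ) / m) p)
      = ((k : ℝ) / m) ^ k * (1 - (k : ℝ) / m) ^ (m - k) := by
  have hk : (m : ℝ) * (k / m) = k := natCast_mul_div_natCast hkm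
  have hmk : (m : ℝ) * (1 - k / m) = ((m - k : ℕ) : ℝ) := by
    rw [mul_one_sub, hk, Nat.cast_sub hkm]
  have ha1 : (k : ℝ) / m ≤ 1 := div_le_one_of_le₀ (by exact_mod_cast hkm) m.cast_nonneg
  have key := rpow_mul_rpow_mul_exp_mul_klBer (by positivity) ha1 hp0 hp1 m
  simpa only [hk, hmk, rpow_natCast] using key

theorem binomial_kl_moment_general (m : ℕ) (p : ℝ) (hp0 : 0 < p) (hp1 : p < 1) :
    ∑ k ∈ Finset.range (m + 1),
        (m.choose k : ℝ) * p ^ k * (1 - p) ^ (m - k) *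
          Real.exp (m * klBer ((k : ℝ) / m) p)
      = ∑ k ∈ Finset.range (m + 1),
          (m.choose k : ℝ) * ((k : ℝ) / m) ^ k * (1 - (k : ℝ) / m) ^ (m - k) := by
  refine Finset.sum_congr rfl fun k hk => ?_
  have hkm : k ≤ m := Nat.lt_succ_iff.1 (Finset.mem_range.1 hk)
  simp only [mul_assoc, ← pow_mul_pow_mul_exp_mul_klBer hkm hp0 hp1]

/-- Binomial Laplace-transform identity for the kl deviation: if
`K ∼ Binomial(m, p)` with `0 < p < 1`, then
`E[e^{m·kl(K/m, p)}] = Σ_{k=0}^{m} C(m,k) (k/m)^k (1 − k/m)^{m−k}`,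
a quantity independent of `p`. -/
theorem binomial_kl_moment (m : ℕ) (hm : 0 < m) (p : ℝ) (hp0 : 0 < p) (hp1 : p < 1) :
    ∑ k ∈ Finset.range (m + 1),
        (m.choose k : ℝ) * p ^ k * (1 - p) ^ (m - k) *
          Real.exp (m * klBer ((k : ℝ) / m) p)
      = ∑ k ∈ Finset.range (m + 1),
          (m.choose k : ℝ) * ((k : ℝ) / m) ^ k * (1 - (k : ℝ) / m) ^ (m - k) :=
  binomial_kl_moment_general m p hp0 hp1
end

section
/- General PAC-Bayesian expectation bound: for any convex function D : [0,1]×[0,1] → ℝ, D( E_S R_S(G_{Q_S}), E_S R_D(G_{Q_S}) ) ≤ (1/m) [ E_S KL(Q_S ‖ P) + ln( E_S E_{h∼P} e^{m·D(R_S(h), R_D(h))} ) ]. -/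
/-!
Jensen's inequality for the jointly convex `f`, applied to the mixture over samples `S` and
voters `h ∼ Q_S`, bounds the left-hand side by `E_S E_{h∼Q_S} f(R_S(h), R_D(h))`. For each sample
the Donsker–Varadhan change of measure `E_Q g ≤ KL(Q‖P) + ln E_P e^g` with `g = m f` turns this into
the Kullback–Leibler term plus `ln E_P e^{m f}`, and concavity of `ln` moves the expectation over
`S` inside the logarithm.
-/

open Finset Real

theorem ConvexOn.map_sum_sum_le {𝕜 E β ι κ : Type*} [Field 𝕜] [LinearOrder 𝕜]
    [IsStrictOrderedRing 𝕜] [AddCommGroup E] [AddCommGroup β] [PartialOrder β]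
    [IsOrderedAddMonoid β] [Module 𝕜 E] [Module 𝕜 β] [IsStrictOrderedModule 𝕜 β]
    {s : Set E} {f : E → β} (hf : ConvexOn 𝕜 s f) {t : Finset ι} {u : Finset κ}
    {μ : ι → 𝕜} {w : ι → κ → 𝕜} {p : ι → κ → E}
    (hμ₀ : ∀ i ∈ t, 0 ≤ μ i) (hμ₁ : ∑ i ∈ t, μ i = 1)
    (hw₀ : ∀ i ∈ t, ∀ j ∈ u, 0 ≤ w i j) (hw₁ : ∀ i ∈ t, ∑ j ∈ u, w i j = 1)
    (hp : ∀ i ∈ t, ∀ j ∈ u, p i j ∈ s) :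
    f (∑ i ∈ t, μ i • ∑ j ∈ u, w i j • p i j) ≤ ∑ i ∈ t, μ i • ∑ j ∈ u, w i j • f (p i j) :=
  calc f (∑ i ∈ t, μ i • ∑ j ∈ u, w i j • p i j)
      ≤ ∑ i ∈ t, μ i • f (∑ j ∈ u, w i j • p i j) :=
        hf.map_sum_le hμ₀ hμ₁ fun i hi => hf.1.sum_mem (hw₀ i hi) (hw₁ i hi) (hp i hi)
    _ ≤ ∑ i ∈ t, μ i • ∑ j ∈ u, w i j • f (p i j) :=
        sum_le_sum fun i hi =>
          smul_le_smul_of_nonneg_left (hf.map_sum_le (hw₀ i hi) (hw₁ i hi) (hp i hi)) (hμ₀ i hi)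

theorem Real.sum_mul_le_sum_mul_add_log_sum_mul {ι : Type*} {t : Finset ι} {μ a b c : ι → ℝ}
    (hμ₀ : ∀ i ∈ t, 0 ≤ μ i) (hμ₁ : ∑ i ∈ t, μ i = 1) (hc : ∀ i ∈ t, 0 < c i)
    (h : ∀ i ∈ t, a i ≤ b i + log (c i)) :
    ∑ i ∈ t, μ i * a i ≤ ∑ i ∈ t, μ i * b i + log (∑ i ∈ t, μ i * c i) :=
  calc ∑ i ∈ t, μ i * a i
      ≤ ∑ i ∈ t, μ i * (b i + log (c i)) :=
        sum_le_sum fun i hi => mul_le_mul_of_nonneg_left (h i hi) (hμ₀ i hi)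
    _ = ∑ i ∈ t, μ i * b i + ∑ i ∈ t, μ i • log (c i) := by
        simp only [mul_add, sum_add_distrib, smul_eq_mul]
    _ ≤ ∑ i ∈ t, μ i * b i + log (∑ i ∈ t, μ i • c i) :=
        add_le_add_right (strictConcaveOn_log_Ioi.concaveOn.le_map_sum hμ₀ hμ₁ hc) _

theorem Fintype.sum_pi_prod_eq_one {ι α R : Type*} [Fintype ι] [DecidableEq ι] [Fintype α]
    [CommSemiring R] {D : α → R} (hD : ∑ a, D a = 1) : ∑ s : ι → α, ∏ i, D (s i) = 1 := by
  rw [← Fintype.prod_sum fun _ => D, hD, prod_const_one]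

theorem sum_div_mem_Icc_of_mem_Icc {n : ℕ} {x : Fin n → ℝ} (hx : ∀ i, x i ∈ Set.Icc (0 : ℝ) 1) :
    (∑ i, x i) / n ∈ Set.Icc (0 : ℝ) 1 := by
  refine ⟨div_nonneg (sum_nonneg fun i _ => (hx i).1) n.cast_nonneg,
    div_le_one_of_le₀ ?_ n.cast_nonneg⟩
  simpa using sum_le_card_nsmul univ x 1 fun i _ => (hx i).2

section ChangeOfMeasure

variable {H : Type*} [Fintype H] {P Q : H → ℝ}

theorem exists_pos_of_sum_eq_one_of_absolutelyContinuous (hP₀ : ∀ h, 0 ≤ P h)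
    (hQ₁ : ∑ h, Q h = 1) (hQP : ∀ h, P h = 0 → Q h = 0) : ∃ h, 0 < P h := by
  by_contra! hP
  have hQ : ∀ h, Q h = 0 := fun h => hQP h ((hP h).antisymm (hP₀ h))
  simp [hQ] at hQ₁

theorem Real.sum_mul_exp_pos (hP₀ : ∀ h, 0 ≤ P h) (hQ₁ : ∑ h, Q h = 1)
    (hQP : ∀ h, P h = 0 → Q h = 0) (g : H → ℝ) : 0 < ∑ h, P h * exp (g h) := by
  obtain ⟨h₀, hh₀⟩ := exists_pos_of_sum_eq_one_of_absolutelyContinuous hP₀ hQ₁ hQP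
  exact sum_pos' (fun h _ => mul_nonneg (hP₀ h) (exp_pos _).le)
    ⟨h₀, mem_univ _, mul_pos hh₀ (exp_pos _)⟩

/-- `log x ≤ x - 1` at `x = p e^g / (q c)`; summed over `h` with `c = E_P e^g` it gives
Donsker–Varadhan without restricting to the support of `Q`. -/
theorem Real.mul_sub_log_div_sub_log_le {p q c : ℝ} (g : ℝ) (hp : 0 ≤ p) (hq : 0 ≤ q)
    (hpq : p = 0 → q = 0) (hc : 0 < c) :
    q * (g - log (q / p) - log c) ≤ p * exp g / c - q := by
  rcases hq.eq_or_lt with rfl | hq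
  · simp only [zero_mul, sub_zero]
    positivity
  have hp : 0 < p := hp.lt_of_ne fun h => hq.ne' (hpq h.symm)
  have hlog : g - log (q / p) - log c = log (p * exp g / (q * c)) := by
    rw [log_div (mul_pos hp (exp_pos g)).ne' (mul_pos hq hc).ne', log_mul hp.ne' (exp_pos g).ne',
      log_exp, log_mul hq.ne' hc.ne', log_div hq.ne' hp.ne']
    ring
  calc q * (g - log (q / p) - log c)
      ≤ q * (p * exp g / (q * c) - 1) := by
        rw [hlog]
        exact mul_le_mul_of_nonneg_left (log_le_sub_one_of_pos (by positivity)) hq.le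
    _ = p * exp g / c - q := by field_simp

theorem Real.sum_mul_le_sum_mul_log_div_add_log_sum_mul_exp (hP₀ : ∀ h, 0 ≤ P h)
    (hQ₀ : ∀ h, 0 ≤ Q h) (hQ₁ : ∑ h, Q h = 1) (hQP : ∀ h, P h = 0 → Q h = 0) (g : H → ℝ) :
    ∑ h, Q h * g h ≤ ∑ h, Q h * log (Q h / P h) + log (∑ h, P h * exp (g h)) := by
  have hZ := sum_mul_exp_pos hP₀ hQ₁ hQP g
  have key := sum_le_sum fun h (_ : h ∈ univ) =>
    mul_sub_log_div_sub_log_le (g h) (hP₀ h) (hQ₀ h) (hQP h) hZ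
  simp only [mul_sub, sum_sub_distrib, ← sum_mul, ← sum_div, hQ₁, div_self hZ.ne'] at key
  linarith

end ChangeOfMeasure

theorem pac_bayes_expectation_bound_general
    {X H : Type*} [Fintype X] [Fintype H] (m : ℕ) (hm : 0 < m)
    (v : H → X → ℝ)
    (D : X × Bool → ℝ) (hD0 : ∀ z, 0 ≤ D z) (hD1 : ∑ z, D z = 1)
    (P : H → ℝ) (hP0 : ∀ h, 0 ≤ P h)
    (Q : (Fin m → X × Bool) → H → ℝ)
    (hQ0 : ∀ s h, 0 ≤ Q s h) (hQ1 : ∀ s, ∑ h, Q s h = 1)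
    (hQP : ∀ s h, P h = 0 → Q s h = 0)
    (f : ℝ → ℝ → ℝ)
    (hf : ConvexOn ℝ ((Set.Icc (0 : ℝ) 1) ×ˢ (Set.Icc (0 : ℝ) 1))
            (fun q : ℝ × ℝ => f q.1 q.2)) :
    -- error indicator of voter h on example z :
    let err : H → X × Bool → ℝ := fun h z =>
      if v h z.1 = (if z.2 then (1 : ℝ) else -1) then 0 else 1
    -- true and empirical risks of voter h :
    let RD : H → ℝ := fun h => ∑ z, D z * err h z
    let RS : (Fin m → X × Bool) → H → ℝ := fun s h => (∑ i, err h (s i)) / m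
    -- expectation over samples S ∼ D^m :
    let ES : ((Fin m → X × Bool) → ℝ) → ℝ := fun g =>
      ∑ s : Fin m → X × Bool, (∏ i, D (s i)) * g s
    f (ES fun s => ∑ h, Q s h * RS s h) (ES fun s => ∑ h, Q s h * RD h)
      ≤ (1 / m) *
        ((ES fun s => ∑ h, Q s h * Real.log (Q s h / P h))
          + Real.log (ES fun s => ∑ h, P h * Real.exp (m * f (RS s h) (RD h)))) := by
  intro err RD RS ES
  have hμ₀ (s : Fin m → X × Bool) : 0 ≤ ∏ i, D (s i) := prod_nonneg fun i _ => hD0 (s i)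
  have hμ₁ : ∑ s : Fin m → X × Bool, ∏ i, D (s i) = 1 := Fintype.sum_pi_prod_eq_one hD1
  have herr (h : H) (z : X × Bool) : err h z ∈ Set.Icc (0 : ℝ) 1 := by
    simp only [err]
    split_ifs <;> norm_num
  have hRD (h : H) : RD h ∈ Set.Icc (0 : ℝ) 1 :=
    (convex_Icc 0 1).sum_mem (fun z _ => hD0 z) hD1 fun z _ => herr h z
  have hRS (s : Fin m → X × Bool) (h : H) : RS s h ∈ Set.Icc (0 : ℝ) 1 :=
    sum_div_mem_Icc_of_mem_Icc fun i => herr h (s i)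
  have jensen := hf.map_sum_sum_le (fun s _ => hμ₀ s) hμ₁ (fun s _ h _ => hQ0 s h)
    (fun s _ => hQ1 s) (p := fun s h => (RS s h, RD h)) fun s _ h _ => ⟨hRS s h, hRD h⟩
  have hpair : ∑ s, (∏ i, D (s i)) • ∑ h, Q s h • (RS s h, RD h)
      = (ES fun s => ∑ h, Q s h * RS s h, ES fun s => ∑ h, Q s h * RD h) := by
    ext <;> simp [ES, Prod.fst_sum, Prod.snd_sum]
  have donskerVaradhan (s : Fin m → X × Bool) : m * ∑ h, Q s h * f (RS s h) (RD h)
      ≤ ∑ h, Q s h * log (Q s h / P h) + log (∑ h, P h * exp (m * f (RS s h) (RD h))) := by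
    simpa only [mul_sum, mul_left_comm] using
      sum_mul_le_sum_mul_log_div_add_log_sum_mul_exp hP0 (hQ0 s) (hQ1 s) (hQP s)
        fun h => m * f (RS s h) (RD h)
  have averaged : m * (ES fun s => ∑ h, Q s h * f (RS s h) (RD h))
      ≤ (ES fun s => ∑ h, Q s h * log (Q s h / P h))
        + log (ES fun s => ∑ h, P h * exp (m * f (RS s h) (RD h))) := by
    simpa only [ES, mul_sum, mul_left_comm] using sum_mul_le_sum_mul_add_log_sum_mul
      (fun s _ => hμ₀ s) hμ₁ (fun s _ => sum_mul_exp_pos hP0 (hQ1 s) (hQP s) _)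
      fun s _ => donskerVaradhan s
  rw [hpair] at jensen
  calc f (ES fun s => ∑ h, Q s h * RS s h) (ES fun s => ∑ h, Q s h * RD h)
      ≤ ES fun s => ∑ h, Q s h * f (RS s h) (RD h) := jensen
    _ = (1 / m) * (m * ES fun s => ∑ h, Q s h * f (RS s h) (RD h)) := by field_simp
    _ ≤ _ := by gcongr

/-- General PAC-Bayesian expectation bound: for any jointly convex
`D : [0,1]×[0,1] → ℝ` (here `f`),
`D(E_S R_S(G_{Q_S}), E_S R_D(G_{Q_S})) ≤ (1/m)[E_S KL(Q_S‖P) + ln(E_S E_{h∼P} e^{m·D(R_S(h), R_D(h))})]`.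
The data distribution is a discrete distribution `D` on `X × Bool`
(`true ↦ label 1`, `false ↦ label −1`), a sample of size `m` is a map
`Fin m → X × Bool` with i.i.d. weight `∏ i, D (s i)`, and `Q` maps each sample
to a posterior over the finite voter set `H`, absolutely continuous w.r.t. `P`. -/
theorem pac_bayes_expectation_bound
    {X H : Type*} [Fintype X] [Fintype H] (m : ℕ) (hm : 0 < m)
    (v : H → X → ℝ) (hv : ∀ h x, v h x = 1 ∨ v h x = -1)
    (D : X × Bool → ℝ) (hD0 : ∀ z, 0 ≤ D z) (hD1 : ∑ z, D z = 1)
    (P : H → ℝ) (hP0 : ∀ h, 0 ≤ P h) (hP1 : ∑ h, P h = 1)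
    (Q : (Fin m → X × Bool) → H → ℝ)
    (hQ0 : ∀ s h, 0 ≤ Q s h) (hQ1 : ∀ s, ∑ h, Q s h = 1)
    (hQP : ∀ s h, P h = 0 → Q s h = 0)
    (f : ℝ → ℝ → ℝ)
    (hf : ConvexOn ℝ ((Set.Icc (0 : ℝ) 1) ×ˢ (Set.Icc (0 : ℝ) 1))
            (fun q : ℝ × ℝ => f q.1 q.2)) :
    -- error indicator of voter h on example z :
    let err : H → X × Bool → ℝ := fun h z =>
      if v h z.1 = (if z.2 then (1 : ℝ) else -1) then 0 else 1
    -- true and empirical risks of voter h :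
    let RD : H → ℝ := fun h => ∑ z, D z * err h z
    let RS : (Fin m → X × Bool) → H → ℝ := fun s h => (∑ i, err h (s i)) / m
    -- expectation over samples S ∼ D^m :
    let ES : ((Fin m → X × Bool) → ℝ) → ℝ := fun g =>
      ∑ s : Fin m → X × Bool, (∏ i, D (s i)) * g s
    f (ES fun s => ∑ h, Q s h * RS s h) (ES fun s => ∑ h, Q s h * RD h)
      ≤ (1 / m) *
        ((ES fun s => ∑ h, Q s h * Real.log (Q s h / P h))
          + Real.log (ES fun s => ∑ h, P h * Real.exp (m * f (RS s h) (RD h)))) :=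
  pac_bayes_expectation_bound_general m hm v D hD0 hD1 P hP0 Q hQ0 hQ1 hQP f hf
end

section
/- PAC-Bayesian expectation bound for the disagreement: for any convex D : [0,1]×[0,1] → ℝ, D( E_S d_S(Q_S), E_S d_D(Q_S) ) ≤ (2/m) [ E_S KL(Q_S ‖ P) + (1/2) ln( E_S E_{(h,h')∼P²} e^{m·D(d_S(h,h'), d_D(h,h'))} ) ]. -/
/-!
By joint convexity of `D` on `[0,1]²`, `D(E_S d_S(Q_S), E_S d_D(Q_S))` is at most the average of
`D(d_S(h,h'), d_D(h,h'))` under `S ∼ D^m` and `(h,h') ∼ Q_S²`. For each sample, the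
Donsker–Varadhan change of measure from `Q_S²` to `P²` bounds that inner average by
`(KL(Q_S²‖P²) + ln E_{P²} e^{m·D(…)}) / m`, and `KL(Q_S²‖P²) = 2 KL(Q_S‖P)`. Finally the
concavity of `ln` moves the expectation over `S` inside the logarithm.
-/

open Finset Real

section DiscreteKL

variable {ι κ : Type*} [Fintype ι] [Fintype κ]

/-- The Kullback–Leibler divergence when `q ≪ p`; otherwise `q i / 0 = 0` makes it finite junk. -/
noncomputable def discreteKL (q p : ι → ℝ) : ℝ :=
  ∑ i, q i * log (q i / p i)

lemma sum_mul_exp_pos {q p : ι → ℝ} (hq1 : ∑ i, q i = 1) (hp0 : ∀ i, 0 ≤ p i)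
    (hqp : ∀ i, p i = 0 → q i = 0) (g : ι → ℝ) : 0 < ∑ i, p i * exp (g i) := by
  obtain ⟨i, -, hqi⟩ := exists_ne_zero_of_sum_ne_zero (hq1.trans_ne one_ne_zero)
  have hpi : 0 < p i := (hp0 i).lt_of_ne' fun h => hqi (hqp i h)
  exact sum_pos' (fun j _ => mul_nonneg (hp0 j) (exp_pos _).le)
    ⟨i, mem_univ i, mul_pos hpi (exp_pos _)⟩

/-- Donsker–Varadhan change of measure. -/
theorem sum_mul_le_discreteKL_add_log_sum_mul_exp {q p : ι → ℝ} (hq0 : ∀ i, 0 ≤ q i)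
    (hq1 : ∑ i, q i = 1) (hp0 : ∀ i, 0 ≤ p i) (hqp : ∀ i, p i = 0 → q i = 0) (g : ι → ℝ) :
    ∑ i, q i * g i ≤ discreteKL q p + log (∑ i, p i * exp (g i)) := by
  set Z := ∑ i, p i * exp (g i)
  have hZ : 0 < Z := sum_mul_exp_pos hq1 hp0 hqp g
  -- `log x ≤ x - 1` at `x = p e^g / (Z q)`: Gibbs' inequality against the tilted measure `p e^g / Z`
  have hgibbs : ∀ i, q i * (g i - log (q i / p i) - log Z) ≤ p i * exp (g i) / Z - q i := by
    intro i
    rcases (hq0 i).eq_or_lt with hqi | hqi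
    · rw [← hqi, zero_mul, sub_zero]
      have := hp0 i
      positivity
    have hpi : 0 < p i := (hp0 i).lt_of_ne' fun h => hqi.ne' (hqp i h)
    calc q i * (g i - log (q i / p i) - log Z)
        = q i * log (p i * exp (g i) / Z / q i) := by
          rw [log_div (by positivity) hqi.ne', log_div (by positivity) hZ.ne',
            log_mul hpi.ne' (exp_pos _).ne', log_exp, log_div hqi.ne' hpi.ne']
          ring
      _ ≤ q i * (p i * exp (g i) / Z / q i - 1) :=
          mul_le_mul_of_nonneg_left (log_le_sub_one_of_pos (by positivity)) hqi.le
      _ = p i * exp (g i) / Z - q i := by field_simp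
  have hsum := sum_le_sum fun i (_ : i ∈ univ) => hgibbs i
  simp only [mul_sub, sum_sub_distrib, ← sum_mul, ← sum_div, hq1, one_mul] at hsum
  rw [div_self hZ.ne'] at hsum
  unfold discreteKL
  linarith

theorem discreteKL_prod {q₁ p₁ : ι → ℝ} {q₂ p₂ : κ → ℝ} (hq₁ : ∑ i, q₁ i = 1)
    (hq₂ : ∑ j, q₂ j = 1) (hqp₁ : ∀ i, p₁ i = 0 → q₁ i = 0) (hqp₂ : ∀ j, p₂ j = 0 → q₂ j = 0) :
    discreteKL (fun x : ι × κ => q₁ x.1 * q₂ x.2) (fun x => p₁ x.1 * p₂ x.2)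
      = discreteKL q₁ p₁ + discreteKL q₂ p₂ := by
  have hlog_mul : ∀ i j, q₁ i * q₂ j * log (q₁ i * q₂ j / (p₁ i * p₂ j))
      = q₁ i * log (q₁ i / p₁ i) * q₂ j + q₁ i * (q₂ j * log (q₂ j / p₂ j)) := by
    intro i j
    by_cases h₁ : q₁ i = 0
    · simp [h₁]
    by_cases h₂ : q₂ j = 0
    · simp [h₂]
    have hp₁ : p₁ i ≠ 0 := mt (hqp₁ i) h₁
    have hp₂ : p₂ j ≠ 0 := mt (hqp₂ j) h₂
    rw [mul_div_mul_comm, log_mul (div_ne_zero h₁ hp₁) (div_ne_zero h₂ hp₂)]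
    ring
  simp only [discreteKL, Fintype.sum_prod_type, hlog_mul, sum_add_distrib, ← mul_sum, ← sum_mul,
    hq₁, hq₂, mul_one, one_mul]

end DiscreteKL

theorem ConvexOn.map_sum_smul_sum_smul_le {E S κ : Type*} [AddCommGroup E] [Module ℝ E]
    [Fintype S] [Fintype κ] {C : Set E} {F : E → ℝ} (hF : ConvexOn ℝ C F) {w : S → ℝ}
    {q : S → κ → ℝ} {x : S → κ → E} (hw0 : ∀ s, 0 ≤ w s) (hw1 : ∑ s, w s = 1)
    (hq0 : ∀ s k, 0 ≤ q s k) (hq1 : ∀ s, ∑ k, q s k = 1) (hx : ∀ s k, x s k ∈ C) :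
    F (∑ s, w s • ∑ k, q s k • x s k) ≤ ∑ s, w s * ∑ k, q s k * F (x s k) :=
  calc F (∑ s, w s • ∑ k, q s k • x s k)
      ≤ ∑ s, w s • F (∑ k, q s k • x s k) :=
        hF.map_sum_le (fun s _ => hw0 s) hw1
          fun s _ => hF.1.sum_mem (fun k _ => hq0 s k) (hq1 s) fun k _ => hx s k
    _ ≤ ∑ s, w s * ∑ k, q s k * F (x s k) :=
        sum_le_sum fun s _ => mul_le_mul_of_nonneg_left
          (hF.map_sum_le (fun k _ => hq0 s k) (hq1 s) fun k _ => hx s k) (hw0 s)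

theorem pac_bayes_expectation_bound_s13 {E S κ : Type*} [AddCommGroup E] [Module ℝ E]
    [Fintype S] [Fintype κ] {C : Set E} {F : E → ℝ} (hF : ConvexOn ℝ C F) {w : S → ℝ}
    {Q : S → κ → ℝ} {P : κ → ℝ} {x : S → κ → E} (hw0 : ∀ s, 0 ≤ w s) (hw1 : ∑ s, w s = 1)
    (hQ0 : ∀ s k, 0 ≤ Q s k) (hQ1 : ∀ s, ∑ k, Q s k = 1) (hP0 : ∀ k, 0 ≤ P k)
    (hQP : ∀ s k, P k = 0 → Q s k = 0) (hx : ∀ s k, x s k ∈ C) {t : ℝ} (ht : 0 < t) :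
    F (∑ s, w s • ∑ k, Q s k • x s k)
      ≤ (∑ s, w s * discreteKL (Q s) P
          + log (∑ s, w s * ∑ k, P k * exp (t * F (x s k)))) / t := by
  set Z : S → ℝ := fun s => ∑ k, P k * exp (t * F (x s k))
  have hdv : ∀ s, ∑ k, Q s k * F (x s k) ≤ (discreteKL (Q s) P + log (Z s)) / t := by
    intro s
    rw [le_div_iff₀ ht, sum_mul]
    simpa only [Z, mul_assoc, mul_comm t] using
      sum_mul_le_discreteKL_add_log_sum_mul_exp (hQ0 s) (hQ1 s) hP0 (hQP s)
        fun k => t * F (x s k)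
  have hlog : ∑ s, w s * log (Z s) ≤ log (∑ s, w s * Z s) := by
    simpa only [smul_eq_mul] using strictConcaveOn_log_Ioi.concaveOn.le_map_sum
      (fun s _ => hw0 s) hw1 fun s _ => sum_mul_exp_pos (hQ1 s) hP0 (hQP s) _
  calc F (∑ s, w s • ∑ k, Q s k • x s k)
      ≤ ∑ s, w s * ∑ k, Q s k * F (x s k) :=
        hF.map_sum_smul_sum_smul_le hw0 hw1 hQ0 hQ1 hx
    _ ≤ ∑ s, w s * ((discreteKL (Q s) P + log (Z s)) / t) :=
        sum_le_sum fun s _ => mul_le_mul_of_nonneg_left (hdv s) (hw0 s)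
    _ = (∑ s, w s * discreteKL (Q s) P + ∑ s, w s * log (Z s)) / t := by
        rw [← sum_add_distrib, sum_div]
        exact sum_congr rfl fun s _ => by ring
    _ ≤ _ := by gcongr

lemma sum_div_mem_Icc_zero_one {n : ℕ} (hn : 0 < n) {a : Fin n → ℝ}
    (ha : ∀ i, a i ∈ Set.Icc 0 1) :
    (∑ i, a i) / n ∈ Set.Icc (0 : ℝ) 1 :=
  ⟨div_nonneg (sum_nonneg fun i _ => (ha i).1) n.cast_nonneg,
    (div_le_one (by exact_mod_cast hn)).2 <|
      (sum_le_sum fun i _ => (ha i).2).trans (by simp)⟩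

theorem pac_bayes_expectation_bound_disagreement_general
    {X H : Type*} [Fintype X] [Fintype H] (m : ℕ) (hm : 0 < m)
    (v : H → X → ℝ)
    (D : X × Bool → ℝ) (hD0 : ∀ z, 0 ≤ D z) (hD1 : ∑ z, D z = 1)
    (P : H → ℝ) (hP0 : ∀ h, 0 ≤ P h)
    (Q : (Fin m → X × Bool) → H → ℝ)
    (hQ0 : ∀ s h, 0 ≤ Q s h) (hQ1 : ∀ s, ∑ h, Q s h = 1)
    (hQP : ∀ s h, P h = 0 → Q s h = 0)
    (f : ℝ → ℝ → ℝ)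
    (hf : ConvexOn ℝ ((Set.Icc (0 : ℝ) 1) ×ˢ (Set.Icc (0 : ℝ) 1))
            (fun q : ℝ × ℝ => f q.1 q.2)) :
    -- disagreement indicator of a pair of voters on an input :
    let dis : H → H → X → ℝ := fun h h' x => if v h x = v h' x then 0 else 1
    -- true and empirical pairwise disagreements :
    let dD : H → H → ℝ := fun h h' => ∑ z : X × Bool, D z * dis h h' z.1
    let dS : (Fin m → X × Bool) → H → H → ℝ := fun s h h' =>
      (∑ i, dis h h' (s i).1) / m
    -- expectation over samples S ∼ D^m :
    let ES : ((Fin m → X × Bool) → ℝ) → ℝ := fun g =>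
      ∑ s : Fin m → X × Bool, (∏ i, D (s i)) * g s
    f (ES fun s => ∑ h, ∑ h', Q s h * Q s h' * dS s h h')
      (ES fun s => ∑ h, ∑ h', Q s h * Q s h' * dD h h')
      ≤ (2 / m) *
        ((ES fun s => ∑ h, Q s h * Real.log (Q s h / P h))
          + (1 / 2) * Real.log
              (ES fun s => ∑ h, ∑ h', P h * P h' *
                Real.exp (m * f (dS s h h') (dD h h')))) := by
  intro dis dD dS ES
  have hdis : ∀ h h' x, dis h h' x ∈ Set.Icc (0 : ℝ) 1 := fun h h' x => by
    simp only [dis]; split_ifs <;> simp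
  have hbox : ∀ s (k : H × H), (dS s k.1 k.2, dD k.1 k.2) ∈ Set.Icc (0 : ℝ) 1 ×ˢ Set.Icc 0 1 :=
    fun s k => ⟨sum_div_mem_Icc_zero_one hm fun i => hdis _ _ _,
      (convex_Icc 0 1).sum_mem (fun z _ => hD0 z) hD1 fun z _ => hdis _ _ _⟩
  have hbound := pac_bayes_expectation_bound_s13 hf (fun s => prod_nonneg fun i _ => hD0 (s i))
    (by rw [← Fintype.sum_pow, hD1, one_pow]) (Q := fun s k => Q s k.1 * Q s k.2)
    (fun s k => mul_nonneg (hQ0 s k.1) (hQ0 s k.2))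
    (fun s => by rw [Fintype.sum_prod_type, ← Fintype.sum_mul_sum, hQ1, one_mul])
    (P := fun k => P k.1 * P k.2) (fun k => mul_nonneg (hP0 k.1) (hP0 k.2))
    (fun s k hk => by rcases mul_eq_zero.1 hk with h | h <;> simp [hQP s _ h])
    hbox (Nat.cast_pos.2 hm)
  have hKL : ∀ s, discreteKL (fun k : H × H => Q s k.1 * Q s k.2) (fun k => P k.1 * P k.2)
      = 2 * discreteKL (Q s) P := fun s => by
    rw [discreteKL_prod (hQ1 s) (hQ1 s) (hQP s) (hQP s), two_mul]
  dsimp only at hbound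
  simp only [hKL, Fintype.sum_prod_type] at hbound
  refine le_of_eq_of_le ?_ (hbound.trans_eq ?_)
  · congr 1 <;> simp [Prod.fst_sum, Prod.snd_sum, ES]
  · simp only [mul_left_comm _ (2 : ℝ), ← mul_sum, ES, discreteKL]
    ring

/-- PAC-Bayesian expectation bound for the disagreement: for any jointly convex
`D : [0,1]×[0,1] → ℝ` (here `f`),
`D(E_S d_S(Q_S), E_S d_D(Q_S)) ≤ (2/m)[E_S KL(Q_S‖P) + (1/2) ln(E_S E_{(h,h')∼P²} e^{m·D(d_S(h,h'), d_D(h,h'))})]`.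
Same discrete setting as the general expectation bound. -/
theorem pac_bayes_expectation_bound_disagreement
    {X H : Type*} [Fintype X] [Fintype H] (m : ℕ) (hm : 0 < m)
    (v : H → X → ℝ) (hv : ∀ h x, v h x = 1 ∨ v h x = -1)
    (D : X × Bool → ℝ) (hD0 : ∀ z, 0 ≤ D z) (hD1 : ∑ z, D z = 1)
    (P : H → ℝ) (hP0 : ∀ h, 0 ≤ P h) (hP1 : ∑ h, P h = 1)
    (Q : (Fin m → X × Bool) → H → ℝ)
    (hQ0 : ∀ s h, 0 ≤ Q s h) (hQ1 : ∀ s, ∑ h, Q s h = 1)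
    (hQP : ∀ s h, P h = 0 → Q s h = 0)
    (f : ℝ → ℝ → ℝ)
    (hf : ConvexOn ℝ ((Set.Icc (0 : ℝ) 1) ×ˢ (Set.Icc (0 : ℝ) 1))
            (fun q : ℝ × ℝ => f q.1 q.2)) :
    -- disagreement indicator of a pair of voters on an input :
    let dis : H → H → X → ℝ := fun h h' x => if v h x = v h' x then 0 else 1
    -- true and empirical pairwise disagreements :
    let dD : H → H → ℝ := fun h h' => ∑ z : X × Bool, D z * dis h h' z.1
    let dS : (Fin m → X × Bool) → H → H → ℝ := fun s h h' =>
      (∑ i, dis h h' (s i).1) / m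
    -- expectation over samples S ∼ D^m :
    let ES : ((Fin m → X × Bool) → ℝ) → ℝ := fun g =>
      ∑ s : Fin m → X × Bool, (∏ i, D (s i)) * g s
    f (ES fun s => ∑ h, ∑ h', Q s h * Q s h' * dS s h h')
      (ES fun s => ∑ h, ∑ h', Q s h * Q s h' * dD h h')
      ≤ (2 / m) *
        ((ES fun s => ∑ h, Q s h * Real.log (Q s h / P h))
          + (1 / 2) * Real.log
              (ES fun s => ∑ h, ∑ h', P h * P h' *
                Real.exp (m * f (dS s h h') (dD h h')))) :=
  pac_bayes_expectation_bound_disagreement_general m hm v D hD0 hD1 P hP0 Q hQ0 hQ1 hQP f hf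
end

section
/- The multiview expected disagreement dominates the ρ-average of view-specific disagreements: d_D^MV(ρ) ≥ E_{v∼ρ} d_D(Q_v). -/
private lemma key_identity {A B : Type*} [Fintype A] [Fintype B]
    (q : A → ℝ) (q' : B → ℝ) (a : A → ℝ) (b : B → ℝ)
    (ha : ∀ i, a i = 1 ∨ a i = -1) (hb : ∀ j, b j = 1 ∨ b j = -1)
    (hq : ∑ i, q i = 1) (hq' : ∑ j, q' j = 1) :
    ∑ i, ∑ j, q i * q' j * (if a i = b j then 0 else 1)
      = (1 - (∑ i, q i * a i) * (∑ j, q' j * b j)) / 2 := by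
  have h1 : ∀ i j, (if a i = b j then (0:ℝ) else 1) = (1 - a i * b j) / 2 := by
    intro i j
    rcases ha i with h | h <;> rcases hb j with h' | h' <;> simp [h, h'] <;> norm_num
  simp_rw [h1]
  have : (1 - (∑ i, q i * a i) * (∑ j, q' j * b j)) / 2
      = ((∑ i, q i) * (∑ j, q' j) - (∑ i, q i * a i) * (∑ j, q' j * b j)) / 2 := by
    rw [hq, hq']; ring
  rw [this, Finset.sum_mul_sum, Finset.sum_mul_sum, ← Finset.sum_sub_distrib,
    Finset.sum_div]
  refine Finset.sum_congr rfl fun i _ => ?_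
  rw [← Finset.sum_sub_distrib, Finset.sum_div]
  exact Finset.sum_congr rfl fun j _ => by ring

/-- The multiview expected disagreement dominates the `ρ`-average of
view-specific disagreements: `d_D^MV(ρ) ≥ E_{v∼ρ} d_D(Q_v)`.
`DX` is the marginal input distribution on `∀ v, X v`. -/
theorem multiview_disagreement_ge_rho_average
    {V : Type*} [Fintype V] [DecidableEq V]
    (X : V → Type*) [∀ v, Fintype (X v)]
    (H : V → Type*) [∀ v, Fintype (H v)]
    (w : ∀ v, H v → X v → ℝ) (hw : ∀ v h x, w v h x = 1 ∨ w v h x = -1)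
    (Q : ∀ v, H v → ℝ) (hQ0 : ∀ v h, 0 ≤ Q v h) (hQ1 : ∀ v, ∑ h, Q v h = 1)
    (rho : V → ℝ) (hrho0 : ∀ v, 0 ≤ rho v) (hrho1 : ∑ v, rho v = 1)
    (DX : (∀ v, X v) → ℝ) (hDX0 : ∀ x, 0 ≤ DX x) (hDX1 : ∑ x, DX x = 1) :
    ∑ v, rho v *
        (∑ x : ∀ v, X v, DX x *
          ∑ h, ∑ h', Q v h * Q v h' *
            (if w v h (x v) = w v h' (x v) then 0 else 1))
      ≤ ∑ x : ∀ v, X v, DX x *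
          ∑ v, ∑ v', rho v * rho v' *
            ∑ h, ∑ h', Q v h * Q v' h' *
              (if w v h (x v) = w v' h' (x v') then 0 else 1) := by
  set m : V → (∀ v, X v) → ℝ := fun v x => ∑ h, Q v h * w v h (x v) with hm
  -- rewrite LHS: swap sums
  have hswap : ∑ v, rho v *
        (∑ x : ∀ v, X v, DX x *
          ∑ h, ∑ h', Q v h * Q v h' *
            (if w v h (x v) = w v h' (x v) then 0 else 1))
      = ∑ x : ∀ v, X v, DX x *
          ∑ v, rho v * ∑ h, ∑ h', Q v h * Q v h' *
            (if w v h (x v) = w v h' (x v) then 0 else 1) := by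
    simp_rw [Finset.mul_sum]
    rw [Finset.sum_comm]
    refine Finset.sum_congr rfl fun x _ => Finset.sum_congr rfl fun v _ => ?_
    refine Finset.sum_congr rfl fun h _ => Finset.sum_congr rfl fun h' _ => by ring
  rw [hswap]
  refine Finset.sum_le_sum fun x _ => mul_le_mul_of_nonneg_left ?_ (hDX0 x)
  -- pointwise inequality in x
  have hkey : ∀ v v', ∑ h, ∑ h', Q v h * Q v' h' *
      (if w v h (x v) = w v' h' (x v')  then 0 else 1) = (1 - m v x * m v' x) / 2 :=
    fun v v' => key_identity (Q v) (Q v') (fun h => w v h (x v)) (fun h' => w v' h' (x v'))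
      (fun h => hw v h (x v)) (fun h' => hw v' h' (x v')) (hQ1 v) (hQ1 v')
  simp_rw [hkey]
  -- Cauchy–Schwarz
  have hcs : (∑ v, rho v * m v x) ^ 2 ≤ ∑ v, rho v * (m v x) ^ 2 := by
    have h := Finset.sum_mul_sq_le_sq_mul_sq Finset.univ
      (fun v => Real.sqrt (rho v)) (fun v => Real.sqrt (rho v) * m v x)
    have e1 : ∀ v, Real.sqrt (rho v) * (Real.sqrt (rho v) * m v x) = rho v * m v x := by
      intro v
      rw [← mul_assoc, Real.mul_self_sqrt (hrho0 v)]
    have e2 : ∀ v, Real.sqrt (rho v) ^ 2 = rho v := fun v => Real.sq_sqrt (hrho0 v)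
    have e3 : ∀ v, (Real.sqrt (rho v) * m v x) ^ 2 = rho v * (m v x) ^ 2 := by
      intro v; rw [mul_pow, e2]
    simp_rw [e1, e2, e3] at h
    rwa [hrho1, one_mul] at h
  have hL : ∑ v, rho v * ((1 - m v x * m v x) / 2)
      = (1 - ∑ v, rho v * (m v x) ^ 2) / 2 := by
    have e : (1 - ∑ v, rho v * (m v x) ^ 2) / 2
        = ((∑ v, rho v) - ∑ v, rho v * (m v x) ^ 2) / 2 := by rw [hrho1]
    rw [e, ← Finset.sum_sub_distrib, Finset.sum_div]
    exact Finset.sum_congr rfl fun v _ => by ring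
  have hR : ∑ v, ∑ v', rho v * rho v' * ((1 - m v x * m v' x) / 2)
      = (1 - (∑ v, rho v * m v x) ^ 2) / 2 := by
    have : (1 - (∑ v, rho v * m v x) ^ 2) / 2
        = ((∑ v, rho v) * (∑ v', rho v') - (∑ v, rho v * m v x) * (∑ v', rho v' * m v' x)) / 2 := by
      rw [hrho1]; ring
    rw [this, Finset.sum_mul_sum, Finset.sum_mul_sum, ← Finset.sum_sub_distrib, Finset.sum_div]
    refine Finset.sum_congr rfl fun v _ => ?_
    rw [← Finset.sum_sub_distrib, Finset.sum_div]
    exact Finset.sum_congr rfl fun v' _ => by ring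
  rw [hL, hR]
  linarith
end

section
/- Multiview C-bound: if R_D(G_ρ^MV) < 1/2, then R_D(B_ρ^MV) ≤ 1 − (1 − 2 R_D(G_ρ^MV))² / (1 − 2 d_D^MV(ρ)) ≤ 1 − (1 − 2 E_{v∼ρ} R_D(G_{Q_v}))² / (1 − 2 E_{v∼ρ} d_D(Q_v)). -/
private lemma sum_aff' {ι : Type*} (s : Finset ι) (Q f : ι → ℝ) (c : ℝ) :
    ∑ i ∈ s, Q i * ((1 - c * f i) / 2)
      = ((∑ i ∈ s, Q i) - c * ∑ i ∈ s, Q i * f i) / 2 := by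
  have h : ∀ i, Q i * ((1 - c * f i) / 2) = Q i / 2 - c / 2 * (Q i * f i) := fun i => by ring
  simp_rw [h, Finset.sum_sub_distrib, ← Finset.sum_div, ← Finset.mul_sum]
  ring

private lemma sum_bil' {ι κ : Type*} (s : Finset ι) (t : Finset κ)
    (Q : ι → ℝ) (R : κ → ℝ) (f : ι → ℝ) (g : κ → ℝ) :
    ∑ i ∈ s, ∑ j ∈ t, Q i * R j * ((1 - f i * g j) / 2)
      = ((∑ i ∈ s, Q i) * (∑ j ∈ t, R j)
          - (∑ i ∈ s, Q i * f i) * (∑ j ∈ t, R j * g j)) / 2 := by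
  have h : ∀ i j, Q i * R j * ((1 - f i * g j) / 2)
      = (Q i * R j) / 2 - ((Q i * f i) * (R j * g j)) / 2 := fun i j => by ring
  simp_rw [h, Finset.sum_sub_distrib, ← Finset.sum_div, ← Finset.sum_mul_sum]
  ring

private lemma swap_sum' {ι κ : Type*} (s : Finset ι) (t : Finset κ)
    (a : ι → ℝ) (b : κ → ℝ) (T : ι → κ → ℝ) :
    ∑ i ∈ s, a i * ∑ j ∈ t, b j * T i j = ∑ j ∈ t, b j * ∑ i ∈ s, a i * T i j := by
  simp_rw [Finset.mul_sum]
  rw [Finset.sum_comm]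
  exact Finset.sum_congr rfl fun j _ => Finset.sum_congr rfl fun i _ => by ring

/-- Multiview C-bound: if `R_D(G_ρ^MV) < 1/2`, then
`R_D(B_ρ^MV) ≤ 1 − (1 − 2 R_D(G_ρ^MV))² / (1 − 2 d_D^MV(ρ))
            ≤ 1 − (1 − 2 E_{v∼ρ} R_D(G_{Q_v}))² / (1 − 2 E_{v∼ρ} d_D(Q_v))`.
Ties of the majority vote are counted as errors. Labels are `Bool`
(`true ↦ 1`, `false ↦ −1`). -/
theorem multiview_c_bound
    {V : Type*} [Fintype V] [DecidableEq V]
    (X : V → Type*) [∀ v, Fintype (X v)]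
    (H : V → Type*) [∀ v, Fintype (H v)]
    (w : ∀ v, H v → X v → ℝ) (hw : ∀ v h x, w v h x = 1 ∨ w v h x = -1)
    (Q : ∀ v, H v → ℝ) (hQ0 : ∀ v h, 0 ≤ Q v h) (hQ1 : ∀ v, ∑ h, Q v h = 1)
    (rho : V → ℝ) (hrho0 : ∀ v, 0 ≤ rho v) (hrho1 : ∑ v, rho v = 1)
    (D : (∀ v, X v) × Bool → ℝ) (hD0 : ∀ z, 0 ≤ D z) (hD1 : ∑ z, D z = 1) :
    -- multiview margin
    let M : (∀ v, X v) × Bool → ℝ := fun z =>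
      (if z.2 then (1 : ℝ) else -1) * ∑ v, rho v * ∑ h, Q v h * w v h (z.1 v)
    -- majority-vote risk (ties as errors)
    let RB : ℝ := ∑ z, D z * (if M z ≤ 0 then 1 else 0)
    -- multiview Gibbs risk and expected disagreement
    let RG : ℝ := ∑ z, D z * ∑ v, rho v * ∑ h, Q v h *
      (if w v h (z.1 v) = (if z.2 then (1 : ℝ) else -1) then 0 else 1)
    let dMV : ℝ := ∑ z, D z * ∑ v, ∑ v', rho v * rho v' *
      ∑ h, ∑ h', Q v h * Q v' h' *
        (if w v h (z.1 v) = w v' h' (z.1 v') then 0 else 1)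
    -- view-specific Gibbs risks and disagreements
    let Rv : V → ℝ := fun v => ∑ z, D z * ∑ h, Q v h *
      (if w v h (z.1 v) = (if z.2 then (1 : ℝ) else -1) then 0 else 1)
    let dv : V → ℝ := fun v => ∑ z, D z * ∑ h, ∑ h', Q v h * Q v h' *
      (if w v h (z.1 v) = w v h' (z.1 v) then 0 else 1)
    RG < 1 / 2 →
      RB ≤ 1 - (1 - 2 * RG) ^ 2 / (1 - 2 * dMV)
      ∧ 1 - (1 - 2 * RG) ^ 2 / (1 - 2 * dMV)
          ≤ 1 - (1 - 2 * ∑ v, rho v * Rv v) ^ 2 / (1 - 2 * ∑ v, rho v * dv v) := by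
  intro M RB RG dMV Rv dv hRG
  -- the sign of the label and the per-view margins
  set s : (∀ v, X v) × Bool → ℝ := fun z => (if z.2 then (1 : ℝ) else -1) with hs_def
  set m : V → ((∀ v, X v) × Bool) → ℝ := fun v z => ∑ h, Q v h * w v h (z.1 v) with hm_def
  have hs_pm : ∀ z, s z = 1 ∨ s z = -1 := by
    intro z; by_cases h : z.2 <;> simp [hs_def, h]
  have hMz : ∀ z, M z = s z * ∑ v, rho v * m v z := fun z => rfl
  -- expectations of M and M²
  set EM : ℝ := ∑ z, D z * M z with hEM_def
  set EM2 : ℝ := ∑ z, D z * (M z) ^ 2 with hEM2_def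
  set S : ℝ := ∑ z, D z * ∑ v, rho v * (m v z) ^ 2 with hS_def
  -- indicator rewriting
  have key1 : ∀ v (h : H v) z,
      (if w v h (z.1 v) = s z then (0:ℝ) else 1) = (1 - s z * w v h (z.1 v)) / 2 := by
    intro v h z
    rcases hw v h (z.1 v) with h1 | h1 <;> rcases hs_pm z with h2 | h2 <;>
      rw [h1, h2] <;> norm_num
  have key2 : ∀ v (h : H v) v' (h' : H v') (z : (∀ v, X v) × Bool),
      (if w v h (z.1 v) = w v' h' (z.1 v') then (0:ℝ) else 1)
        = (1 - w v h (z.1 v) * w v' h' (z.1 v')) / 2 := by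
    intro v h v' h' z
    rcases hw v h (z.1 v) with h1 | h1 <;> rcases hw v' h' (z.1 v') with h2 | h2 <;>
      rw [h1, h2] <;> norm_num
  -- inner Gibbs sums
  have inner1 : ∀ v z, ∑ h, Q v h * (if w v h (z.1 v) = s z then (0:ℝ) else 1)
      = (1 - s z * m v z) / 2 := by
    intro v z
    simp_rw [key1]
    rw [sum_aff' Finset.univ (Q v) (fun h => w v h (z.1 v)) (s z), hQ1 v, hm_def]
  have inner2 : ∀ v v' z,
      ∑ h, ∑ h', Q v h * Q v' h' *
        (if w v h (z.1 v) = w v' h' (z.1 v') then (0:ℝ) else 1)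
      = (1 - m v z * m v' z) / 2 := by
    intro v v' z
    simp_rw [key2]
    rw [sum_bil' Finset.univ Finset.univ (Q v) (Q v')
        (fun h => w v h (z.1 v)) (fun h' => w v' h' (z.1 v')), hQ1 v, hQ1 v', one_mul, hm_def]
  -- RG = (1 - EM)/2
  have hRG_eq : RG = (1 - EM) / 2 := by
    have hz : ∀ z, ∑ v, rho v * ∑ h, Q v h *
        (if w v h (z.1 v) = s z then (0:ℝ) else 1) = (1 - M z) / 2 := by
      intro z
      simp_rw [inner1]
      rw [sum_aff' Finset.univ rho (fun v => m v z) (s z), hrho1, hMz]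
    calc RG = ∑ z, D z * ((1 - M z) / 2) := Finset.sum_congr rfl fun z _ => by rw [← hz z]
      _ = ((∑ z, D z) - 1 * ∑ z, D z * M z) / 2 := by
          simp_rw [show ∀ z, (1 - M z) / 2 = (1 - 1 * M z)/2 from fun z => by ring]
          exact sum_aff' Finset.univ D M 1
      _ = (1 - EM) / 2 := by rw [hD1, hEM_def]; ring
  -- dMV = (1 - EM2)/2
  have hdMV_eq : dMV = (1 - EM2) / 2 := by
    have hz : ∀ z, ∑ v, ∑ v', rho v * rho v' *
        (∑ h, ∑ h', Q v h * Q v' h' *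
          (if w v h (z.1 v) = w v' h' (z.1 v') then (0:ℝ) else 1)) = (1 - (M z) ^ 2) / 2 := by
      intro z
      simp_rw [inner2]
      rw [sum_bil' Finset.univ Finset.univ rho rho (fun v => m v z) (fun v => m v z), hrho1,
        one_mul, hMz]
      rcases hs_pm z with h | h <;> rw [h] <;> ring
    calc dMV = ∑ z, D z * ((1 - (M z) ^ 2) / 2) :=
          Finset.sum_congr rfl fun z _ => by rw [← hz z]
      _ = ((∑ z, D z) - 1 * ∑ z, D z * (M z) ^ 2) / 2 := by
          simp_rw [show ∀ z, (1 - (M z) ^ 2) / 2 = (1 - 1 * (M z) ^ 2)/2 from fun z => by ring]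
          exact sum_aff' Finset.univ D (fun z => (M z) ^ 2) 1
      _ = (1 - EM2) / 2 := by rw [hD1, hEM2_def]; ring
  -- ∑ ρ Rv = RG
  have h3 : ∑ v, rho v * Rv v = RG :=
    swap_sum' Finset.univ Finset.univ rho D
      (fun v z => ∑ h, Q v h * (if w v h (z.1 v) = s z then (0:ℝ) else 1))
  -- 1 - 2 ∑ ρ dv = S
  have h4 : 1 - 2 * ∑ v, rho v * dv v = S := by
    have hswap : ∑ v, rho v * dv v = ∑ z, D z * ∑ v, rho v *
        (∑ h, ∑ h', Q v h * Q v h' *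
          (if w v h (z.1 v) = w v h' (z.1 v) then (0:ℝ) else 1)) :=
      swap_sum' Finset.univ Finset.univ rho D
        (fun v z => ∑ h, ∑ h', Q v h * Q v h' *
          (if w v h (z.1 v) = w v h' (z.1 v) then (0:ℝ) else 1))
    have hz : ∀ z, ∑ v, rho v * (∑ h, ∑ h', Q v h * Q v h' *
        (if w v h (z.1 v) = w v h' (z.1 v) then (0:ℝ) else 1))
        = (1 - ∑ v, rho v * (m v z) ^ 2) / 2 := by
      intro z
      have : ∀ v, (∑ h, ∑ h', Q v h * Q v h' *
          (if w v h (z.1 v) = w v h' (z.1 v) then (0:ℝ) else 1))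
          = (1 - 1 * (m v z) ^ 2) / 2 := by
        intro v; rw [inner2 v v z]; ring
      simp_rw [this]
      rw [sum_aff' Finset.univ rho (fun v => (m v z) ^ 2) 1, hrho1]
      ring
    rw [hswap]
    have : ∑ z, D z * ((1 - ∑ v, rho v * (m v z) ^ 2) / 2)
        = ((∑ z, D z) - 1 * S) / 2 := by
      simp_rw [show ∀ z, (1 - ∑ v, rho v * (m v z) ^ 2) / 2
        = (1 - 1 * (∑ v, rho v * (m v z) ^ 2))/2 from fun z => by ring]
      exact sum_aff' Finset.univ D (fun z => ∑ v, rho v * (m v z) ^ 2) 1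
    rw [Finset.sum_congr rfl fun z _ => by rw [hz z], this, hD1]
    ring
  -- EM2 ≤ S   (Jensen / Cauchy–Schwarz on views)
  have h5 : EM2 ≤ S := by
    apply Finset.sum_le_sum
    intro z _
    apply mul_le_mul_of_nonneg_left _ (hD0 z)
    have hcs := Finset.sum_mul_sq_le_sq_mul_sq Finset.univ
      (fun v => Real.sqrt (rho v)) (fun v => Real.sqrt (rho v) * m v z)
    have h1 : ∀ v, Real.sqrt (rho v) * (Real.sqrt (rho v) * m v z) = rho v * m v z := by
      intro v; rw [← mul_assoc, Real.mul_self_sqrt (hrho0 v)]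
    have h2 : ∀ v, Real.sqrt (rho v) ^ 2 = rho v := fun v => Real.sq_sqrt (hrho0 v)
    have h2' : ∀ v, (Real.sqrt (rho v) * m v z) ^ 2 = rho v * (m v z) ^ 2 := by
      intro v; rw [mul_pow, h2]
    simp_rw [h1, h2, h2'] at hcs
    rw [hrho1, one_mul] at hcs
    calc (M z) ^ 2 = (∑ v, rho v * m v z) ^ 2 := by
          rw [hMz]; rcases hs_pm z with h | h <;> rw [h] <;> ring
      _ ≤ ∑ v, rho v * (m v z) ^ 2 := hcs
  -- EM > 0
  have hEM_pos : 0 < EM := by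
    have : EM = 1 - 2 * RG := by rw [hRG_eq]; ring
    rw [this]; linarith
  -- RB ≥ 0 and the Cantelli step
  have hRB0 : 0 ≤ RB := Finset.sum_nonneg fun z _ => by
    apply mul_nonneg (hD0 z); split <;> norm_num
  have h7 : EM ^ 2 ≤ EM2 * (1 - RB) := by
    set T : ℝ := ∑ z, D z * (M z * (if 0 < M z then 1 else 0)) with hT_def
    have hstep1 : EM ≤ T := by
      apply Finset.sum_le_sum
      intro z _
      rcases lt_or_ge 0 (M z) with h | h
      · rw [if_pos h]; ring_nf; exact le_refl _
      · rw [if_neg (not_lt.mpr h)]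
        have : D z * M z ≤ 0 := mul_nonpos_of_nonneg_of_nonpos (hD0 z) h
        nlinarith
    have hP : ∑ z, D z * (if 0 < M z then (1:ℝ) else 0) = 1 - RB := by
      have : ∀ z, D z * (if 0 < M z then (1:ℝ) else 0)
          = D z * 1 - D z * (if M z ≤ 0 then 1 else 0) := by
        intro z
        rcases lt_or_ge 0 (M z) with h | h
        · rw [if_pos h, if_neg (not_le.mpr h)]; ring
        · rw [if_neg (not_lt.mpr h), if_pos h]; ring
      simp_rw [this, Finset.sum_sub_distrib]
      simp_rw [mul_one]
      rw [hD1]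
    have hcs := Finset.sum_mul_sq_le_sq_mul_sq Finset.univ
      (fun z => Real.sqrt (D z) * M z) (fun z => Real.sqrt (D z) * (if 0 < M z then 1 else 0))
    have e1 : ∀ z, (Real.sqrt (D z) * M z) * (Real.sqrt (D z) * (if 0 < M z then (1:ℝ) else 0))
        = D z * (M z * (if 0 < M z then 1 else 0)) := by
      intro z
      rw [mul_mul_mul_comm, Real.mul_self_sqrt (hD0 z)]
    have e2 : ∀ z, (Real.sqrt (D z) * M z) ^ 2 = D z * (M z) ^ 2 := by
      intro z; rw [mul_pow, Real.sq_sqrt (hD0 z)]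
    have e3 : ∀ z, (Real.sqrt (D z) * (if 0 < M z then (1:ℝ) else 0)) ^ 2
        = D z * (if 0 < M z then 1 else 0) := by
      intro z; rw [mul_pow, Real.sq_sqrt (hD0 z)]
      congr 1
      split <;> norm_num
    simp_rw [e1, e2, e3] at hcs
    rw [hP] at hcs
    have hT2 : EM ^ 2 ≤ T ^ 2 := by
      apply pow_le_pow_left₀ (le_of_lt hEM_pos) hstep1
    exact le_trans hT2 hcs
  -- EM2 > 0
  have hEM2_pos : 0 < EM2 := by
    by_contra hcon
    push_neg at hcon
    have hEM2_nonneg : 0 ≤ EM2 := Finset.sum_nonneg fun z _ =>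
      mul_nonneg (hD0 z) (sq_nonneg _)
    have hz : EM2 = 0 := le_antisymm hcon hEM2_nonneg
    rw [hz] at h7
    nlinarith [hEM_pos]
  have hS_pos : 0 < S := lt_of_lt_of_le hEM2_pos h5
  -- rewrite the goal quantities
  have e1 : 1 - 2 * RG = EM := by rw [hRG_eq]; ring
  have e2 : 1 - 2 * dMV = EM2 := by rw [hdMV_eq]; ring
  constructor
  · rw [e1, e2]
    have : EM ^ 2 / EM2 ≤ 1 - RB := by
      rw [div_le_iff₀ hEM2_pos]; linarith [h7]
    linarith
  · rw [h3, h4, e1, e2]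
    have : EM ^ 2 / S ≤ EM ^ 2 / EM2 :=
      div_le_div_of_nonneg_left (sq_nonneg EM) hEM2_pos h5
    linarith
end

section
/- Multiview general PAC-Bayesian expectation theorem: for any jointly convex D : [0,1]×[0,1] → ℝ, D( E_S [ (1/2) d_S^MV(ρ_S) + e_S^MV(ρ_S) ], E_S R_D(G_{ρ_S}^MV) ) ≤ (1/m)[ E_S E_{v∼ρ_S} KL(Q_{v,S} ‖ P_v) + E_S KL(ρ_S ‖ π) + ln( E_S E_{v∼π} E_{h∼P_v} e^{m·D(R_S(h), R_D(h))} ) ]. -/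
open Finset

lemma gibbs_ineq {ι : Type*} [Fintype ι] (q p g : ι → ℝ)
    (hq0 : ∀ i, 0 ≤ q i) (hq1 : ∑ i, q i = 1)
    (hp0 : ∀ i, 0 ≤ p i) (hp1 : ∑ i, p i = 1)
    (habs : ∀ i, p i = 0 → q i = 0) :
    ∑ i, q i * g i ≤ ∑ i, q i * Real.log (q i / p i)
      + Real.log (∑ i, p i * Real.exp (g i)) := by
  set T := ∑ i, p i * Real.exp (g i) with hT
  have hTpos : 0 < T := by
    obtain ⟨i, hi⟩ : ∃ i, p i ≠ 0 := by
      by_contra h; push_neg at h; simp [h] at hp1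
    have hpi : 0 < p i := lt_of_le_of_ne (hp0 i) (Ne.symm hi)
    calc (0:ℝ) < p i * Real.exp (g i) := mul_pos hpi (Real.exp_pos _)
      _ ≤ T := Finset.single_le_sum
          (fun j _ => mul_nonneg (hp0 j) (Real.exp_pos _).le) (Finset.mem_univ i)
  have key : ∀ i, q i * g i - q i * Real.log (q i / p i) - q i * Real.log T
      ≤ p i * Real.exp (g i) / T - q i := by
    intro i
    rcases eq_or_lt_of_le (hq0 i) with h0 | h0
    · rw [← h0]
      have : 0 ≤ p i * Real.exp (g i) / T :=
        div_nonneg (mul_nonneg (hp0 i) (Real.exp_pos _).le) hTpos.le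
      simp only [zero_mul, sub_zero, sub_zero]
      linarith
    · have hpi : 0 < p i := by
        rcases eq_or_lt_of_le (hp0 i) with h | h
        · exact absurd (habs i h.symm) (ne_of_gt h0)
        · exact h
      have hX : (0:ℝ) < p i * Real.exp (g i) / (q i * T) := by
        apply div_pos (mul_pos hpi (Real.exp_pos _)) (mul_pos h0 hTpos)
      have hlog := Real.log_le_sub_one_of_pos hX
      have hexp : Real.log (p i * Real.exp (g i) / (q i * T))
          = g i - Real.log (q i / p i) - Real.log T := by
        rw [Real.log_div (by positivity) (by positivity),
          Real.log_mul (ne_of_gt hpi) (Real.exp_ne_zero _),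
          Real.log_mul (ne_of_gt h0) (ne_of_gt hTpos), Real.log_exp,
          Real.log_div (ne_of_gt h0) (ne_of_gt hpi)]
        ring
      have hmul := mul_le_mul_of_nonneg_left hlog (le_of_lt h0)
      rw [hexp] at hmul
      have hq : q i * (p i * Real.exp (g i) / (q i * T) - 1)
          = p i * Real.exp (g i) / T - q i := by
        field_simp
      rw [hq] at hmul
      linarith [hmul]
  have hsum := Finset.sum_le_sum (fun i (_ : i ∈ Finset.univ) => key i)
  rw [Finset.sum_sub_distrib, Finset.sum_sub_distrib, Finset.sum_sub_distrib,
    ← Finset.sum_mul, hq1, one_mul, ← Finset.sum_div, ← hT, div_self (ne_of_gt hTpos)] at hsum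
  linarith [hsum]

lemma pair_avg {α β : Type*} [Fintype α] [Fintype β] (u : α → ℝ) (t : β → ℝ)
    (A : α → ℝ) (B : β → ℝ) (hu : ∑ x, u x = 1) (ht : ∑ y, t y = 1) :
    ∑ x, ∑ y, u x * t y * ((A x + B y) / 2)
      = ((∑ x, u x * A x) + ∑ y, t y * B y) / 2 := by
  calc ∑ x, ∑ y, u x * t y * ((A x + B y) / 2)
      = ∑ x, ∑ y, ((u x * A x / 2) * t y + (u x / 2) * (t y * B y)) :=
        Finset.sum_congr rfl fun x _ => Finset.sum_congr rfl fun y _ => by ring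
    _ = (∑ x, u x * A x / 2) * (∑ y, t y) + (∑ x, u x / 2) * (∑ y, t y * B y) := by
        rw [Finset.sum_mul_sum, Finset.sum_mul_sum, ← Finset.sum_add_distrib]
        exact Finset.sum_congr rfl fun x _ => Finset.sum_add_distrib
    _ = ((∑ x, u x * A x) + ∑ y, t y * B y) / 2 := by
        rw [ht, ← Finset.sum_div, ← Finset.sum_div, hu]
        ring

lemma quad_ident {V' : Type*} [Fintype V'] {H' : V' → Type*} [∀ v, Fintype (H' v)]
    (r : V' → ℝ) (qq : ∀ v, H' v → ℝ) (a : ∀ v, H' v → ℝ)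
    (d : ∀ v v', H' v → H' v' → ℝ)
    (hr1 : ∑ v, r v = 1) (hq1 : ∀ v, ∑ h, qq v h = 1)
    (hd : ∀ v v' h h', (1/2) * d v v' h h' + a v h * a v' h'
      = (a v h + a v' h') / 2) :
    (1/2) * (∑ v, ∑ v', r v * r v' * ∑ h, ∑ h', qq v h * qq v' h' * d v v' h h')
      + ∑ v, ∑ v', r v * r v' * ∑ h, ∑ h', qq v h * qq v' h' * (a v h * a v' h')
      = ∑ v, r v * ∑ h, qq v h * a v h := by
  set A : V' → ℝ := fun v => ∑ h, qq v h * a v h with hA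
  have inner : ∀ v v', (1/2) * (∑ h, ∑ h', qq v h * qq v' h' * d v v' h h')
      + ∑ h, ∑ h', qq v h * qq v' h' * (a v h * a v' h') = (A v + A v') / 2 := by
    intro v v'
    have e1 : (1/2) * (∑ h, ∑ h', qq v h * qq v' h' * d v v' h h')
        + ∑ h, ∑ h', qq v h * qq v' h' * (a v h * a v' h')
        = ∑ h, ∑ h', qq v h * qq v' h' * ((1/2) * d v v' h h' + a v h * a v' h') := by
      rw [Finset.mul_sum, ← Finset.sum_add_distrib]
      refine Finset.sum_congr rfl fun h _ => ?_
      rw [Finset.mul_sum, ← Finset.sum_add_distrib]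
      exact Finset.sum_congr rfl fun h' _ => by ring
    rw [e1]
    simp_rw [hd]
    exact pair_avg _ _ _ _ (hq1 v) (hq1 v')
  have outer : (1/2) * (∑ v, ∑ v', r v * r v' *
        ∑ h, ∑ h', qq v h * qq v' h' * d v v' h h')
      + ∑ v, ∑ v', r v * r v' * ∑ h, ∑ h', qq v h * qq v' h' * (a v h * a v' h')
      = ∑ v, ∑ v', r v * r v' * ((A v + A v') / 2) := by
    rw [Finset.mul_sum, ← Finset.sum_add_distrib]
    refine Finset.sum_congr rfl fun v _ => ?_
    rw [Finset.mul_sum, ← Finset.sum_add_distrib]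
    refine Finset.sum_congr rfl fun v' _ => ?_
    rw [← inner v v']
    ring
  rw [outer, pair_avg r r A A hr1 hr1]
  ring

/-- Multiview general PAC-Bayesian expectation theorem: for any jointly convex
`D : [0,1]×[0,1] → ℝ` (here `f`),
`D(E_S[(1/2) d_S^MV(ρ_S) + e_S^MV(ρ_S)], E_S R_D(G_{ρ_S}^MV))
  ≤ (1/m)[E_S E_{v∼ρ_S} KL(Q_{v,S}‖P_v) + E_S KL(ρ_S‖π)
          + ln(E_S E_{v∼π} E_{h∼P_v} e^{m·D(R_S(h), R_D(h))})]`.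
Multiview examples are `(x, y)`, `x : ∀ v, X v`, labels `Bool`
(`true ↦ 1`, `false ↦ −1`); a sample of size `m` is `s : Fin m → (∀ v, X v) × Bool`,
with i.i.d. weight `∏ i, D (s i)`. -/
theorem multiview_pac_bayes_expectation_bound
    {V : Type*} [Fintype V] [DecidableEq V]
    (X : V → Type*) [∀ v, Fintype (X v)]
    (H : V → Type*) [∀ v, Fintype (H v)]
    (m : ℕ) (hm : 0 < m)
    (w : ∀ v, H v → X v → ℝ) (hw : ∀ v h x, w v h x = 1 ∨ w v h x = -1)
    (D : (∀ v, X v) × Bool → ℝ) (hD0 : ∀ z, 0 ≤ D z) (hD1 : ∑ z, D z = 1)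
    (P : ∀ v, H v → ℝ) (hP0 : ∀ v h, 0 ≤ P v h) (hP1 : ∀ v, ∑ h, P v h = 1)
    (pi : V → ℝ) (hpi0 : ∀ v, 0 ≤ pi v) (hpi1 : ∑ v, pi v = 1)
    (Q : (Fin m → (∀ v, X v) × Bool) → ∀ v, H v → ℝ)
    (hQ0 : ∀ s v h, 0 ≤ Q s v h) (hQ1 : ∀ s v, ∑ h, Q s v h = 1)
    (hQP : ∀ s v h, P v h = 0 → Q s v h = 0)
    (rho : (Fin m → (∀ v, X v) × Bool) → V → ℝ)
    (hrho0 : ∀ s v, 0 ≤ rho s v) (hrho1 : ∀ s, ∑ v, rho s v = 1)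
    (hrp : ∀ s v, pi v = 0 → rho s v = 0)
    (f : ℝ → ℝ → ℝ)
    (hf : ConvexOn ℝ ((Set.Icc (0 : ℝ) 1) ×ˢ (Set.Icc (0 : ℝ) 1))
            (fun q : ℝ × ℝ => f q.1 q.2)) :
    -- error indicator of voter h (of view v) on example z :
    let err : ∀ v, H v → (∀ v, X v) × Bool → ℝ := fun v h z =>
      if w v h (z.1 v) = (if z.2 then (1 : ℝ) else -1) then 0 else 1
    -- true and empirical risks of a voter :
    let RD : ∀ v, H v → ℝ := fun v h => ∑ z, D z * err v h z
    let RS : (Fin m → (∀ v, X v) × Bool) → ∀ v, H v → ℝ := fun s v h =>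
      (∑ i, err v h (s i)) / m
    -- empirical multiview expected disagreement :
    let dS : (Fin m → (∀ v, X v) × Bool) → ℝ := fun s =>
      (∑ i, ∑ v, ∑ v', rho s v * rho s v' *
          ∑ h, ∑ h', Q s v h * Q s v' h' *
            (if w v h ((s i).1 v) = w v' h' ((s i).1 v') then 0 else 1)) / m
    -- empirical multiview expected joint error :
    let eS : (Fin m → (∀ v, X v) × Bool) → ℝ := fun s =>
      (∑ i, ∑ v, ∑ v', rho s v * rho s v' *
          ∑ h, ∑ h', Q s v h * Q s v' h' * (err v h (s i) * err v' h' (s i))) / m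
    -- expectation over samples S ∼ D^m :
    let ES : ((Fin m → (∀ v, X v) × Bool) → ℝ) → ℝ := fun g =>
      ∑ s : Fin m → (∀ v, X v) × Bool, (∏ i, D (s i)) * g s
    f (ES fun s => (1 / 2) * dS s + eS s)
      (ES fun s => ∑ v, rho s v * ∑ h, Q s v h * RD v h)
      ≤ (1 / m) *
        ((ES fun s => ∑ v, rho s v * ∑ h, Q s v h * Real.log (Q s v h / P v h))
          + (ES fun s => ∑ v, rho s v * Real.log (rho s v / pi v))
          + Real.log (ES fun s => ∑ v, pi v *
              ∑ h, P v h * Real.exp (m * f (RS s v h) (RD v h)))) := by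
  intro err RD RS dS eS ES
  have hmR : (0:ℝ) < m := by exact_mod_cast hm
  have hmne : (m:ℝ) ≠ 0 := ne_of_gt hmR
  -- basic facts about err
  have herr01 : ∀ v h z, err v h z = 0 ∨ err v h z = 1 := by
    intro v h z; simp only [err]; split <;> norm_num <;> exact em _
  have herr0 : ∀ v h z, 0 ≤ err v h z := by
    intro v h z; rcases herr01 v h z with h' | h' <;> rw [h'] <;> norm_num
  have herr1 : ∀ v h z, err v h z ≤ 1 := by
    intro v h z; rcases herr01 v h z with h' | h' <;> rw [h'] <;> norm_num
  -- bounds on risks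
  have hRD01 : ∀ v h, RD v h ∈ Set.Icc (0:ℝ) 1 := by
    intro v h
    constructor
    · exact Finset.sum_nonneg fun z _ => mul_nonneg (hD0 z) (herr0 v h z)
    · calc ∑ z, D z * err v h z ≤ ∑ z, D z * 1 :=
            Finset.sum_le_sum fun z _ =>
              mul_le_mul_of_nonneg_left (herr1 v h z) (hD0 z)
        _ = 1 := by simp [hD1]
  have hRS01 : ∀ s v h, RS s v h ∈ Set.Icc (0:ℝ) 1 := by
    intro s v h
    constructor
    · exact div_nonneg (Finset.sum_nonneg fun i _ => herr0 v h (s i)) hmR.le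
    · rw [div_le_one hmR]
      calc ∑ i, err v h (s i) ≤ ∑ _i : Fin m, (1:ℝ) :=
            Finset.sum_le_sum fun i _ => herr1 v h (s i)
        _ = m := by simp
  -- sample weights
  set W : (Fin m → (∀ v, X v) × Bool) → ℝ := fun s => ∏ i, D (s i) with hWdef
  have hW0 : ∀ s, 0 ≤ W s := fun s => Finset.prod_nonneg fun i _ => hD0 (s i)
  have hW1 : ∑ s, W s = 1 := by
    rw [hWdef, ← Fintype.prod_sum]
    simp [hD1]
  -- the combined index type and measures
  set ι := (Fin m → (∀ v, X v) × Bool) × ((v : V) × H v) with hι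
  set wgt : ι → ℝ := fun t => W t.1 * rho t.1 t.2.1 * Q t.1 t.2.1 t.2.2 with hwgt
  set pr : ι → ℝ := fun t => W t.1 * pi t.2.1 * P t.2.1 t.2.2 with hpr
  have reindexQ : ∀ F : (Fin m → (∀ v, X v) × Bool) → ∀ v, H v → ℝ,
      ∑ t : ι, wgt t * F t.1 t.2.1 t.2.2
        = ∑ s, W s * ∑ v, rho s v * ∑ h, Q s v h * F s v h := by
    intro F
    rw [Fintype.sum_prod_type]
    refine Finset.sum_congr rfl fun s _ => ?_
    rw [← Finset.univ_sigma_univ, Finset.sum_sigma, Finset.mul_sum]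
    refine Finset.sum_congr rfl fun v _ => ?_
    rw [Finset.mul_sum, Finset.mul_sum]
    exact Finset.sum_congr rfl fun h _ => by simp only [hwgt]; ring
  have reindexP : ∀ F : (Fin m → (∀ v, X v) × Bool) → ∀ v, H v → ℝ,
      ∑ t : ι, pr t * F t.1 t.2.1 t.2.2
        = ∑ s, W s * ∑ v, pi v * ∑ h, P v h * F s v h := by
    intro F
    rw [Fintype.sum_prod_type]
    refine Finset.sum_congr rfl fun s _ => ?_
    rw [← Finset.univ_sigma_univ, Finset.sum_sigma, Finset.mul_sum]
    refine Finset.sum_congr rfl fun v _ => ?_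
    rw [Finset.mul_sum, Finset.mul_sum]
    exact Finset.sum_congr rfl fun h _ => by simp only [hpr]; ring
  have hq0 : ∀ t : ι, 0 ≤ wgt t := fun t =>
    mul_nonneg (mul_nonneg (hW0 _) (hrho0 _ _)) (hQ0 _ _ _)
  have hp0 : ∀ t : ι, 0 ≤ pr t := fun t =>
    mul_nonneg (mul_nonneg (hW0 _) (hpi0 _)) (hP0 _ _)
  have hq1 : ∑ t : ι, wgt t = 1 := by
    have h := reindexQ (fun _ _ _ => (1:ℝ))
    simp only [mul_one] at h
    rw [h]
    simp only [hQ1, mul_one, hrho1]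
    exact hW1
  have hp1 : ∑ t : ι, pr t = 1 := by
    have h := reindexP (fun _ _ _ => (1:ℝ))
    simp only [mul_one] at h
    rw [h]
    simp only [hP1, mul_one, hpi1]
    exact hW1
  have habs : ∀ t : ι, pr t = 0 → wgt t = 0 := by
    rintro ⟨s, v, h⟩ hpt
    simp only [hpr, mul_eq_zero] at hpt
    simp only [hwgt]
    rcases hpt with (hpt | hpt) | hpt
    · rw [hpt]; ring
    · rw [hrp s v hpt]; ring
    · rw [hQP s v h hpt]; ring
  -- the disagreement/joint error pointwise identity
  have hkey : ∀ (v v' : V) (h : H v) (h' : H v') (z : (∀ v, X v) × Bool),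
      (1/2) * (if w v h (z.1 v) = w v' h' (z.1 v') then (0:ℝ) else 1)
        + err v h z * err v' h' z = (err v h z + err v' h' z) / 2 := by
    intro v v' h h' z
    obtain ⟨x, b⟩ := z
    simp only [err]
    rcases hw v h (x v) with h1 | h1 <;> rcases hw v' h' (x v') with h2 | h2 <;>
      cases b <;> simp [h1, h2] <;> norm_num
  -- per-sample identity : (1/2) dS + eS = Gibbs empirical risk
  have hDE : ∀ s, (1/2) * dS s + eS s
      = ∑ v, rho s v * ∑ h, Q s v h * RS s v h := by
    intro s
    simp only [dS, eS, RS]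
    rw [← mul_div_assoc, ← add_div]
    have num : (1/2) * (∑ i, ∑ v, ∑ v', rho s v * rho s v' *
          ∑ h, ∑ h', Q s v h * Q s v' h' *
            (if w v h ((s i).1 v) = w v' h' ((s i).1 v') then (0:ℝ) else 1))
        + ∑ i, ∑ v, ∑ v', rho s v * rho s v' *
            ∑ h, ∑ h', Q s v h * Q s v' h' * (err v h (s i) * err v' h' (s i))
        = ∑ i, ∑ v, rho s v * ∑ h, Q s v h * err v h (s i) := by
      rw [Finset.mul_sum, ← Finset.sum_add_distrib]
      refine Finset.sum_congr rfl fun i _ => ?_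
      exact quad_ident (rho s) (Q s) (fun v h => err v h (s i))
        (fun v v' h h' => if w v h ((s i).1 v) = w v' h' ((s i).1 v') then (0:ℝ) else 1)
        (hrho1 s) (hQ1 s) (fun v v' h h' => hkey v v' h h' (s i))
    rw [num, Finset.sum_comm, Finset.sum_div]
    refine Finset.sum_congr rfl fun v _ => ?_
    rw [← Finset.mul_sum, mul_div_assoc]
    congr 1
    rw [Finset.sum_comm, Finset.sum_div]
    refine Finset.sum_congr rfl fun h _ => ?_
    rw [← Finset.mul_sum, mul_div_assoc]
  -- unfold ES
  have hES : ∀ gg : (Fin m → (∀ v, X v) × Bool) → ℝ, ES gg = ∑ s, W s * gg s :=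
    fun _ => rfl
  -- first and second arguments as sums over the combined index
  have hA1 : (ES fun s => (1 / 2) * dS s + eS s)
      = ∑ t : ι, wgt t * RS t.1 t.2.1 t.2.2 := by
    rw [hES, reindexQ (fun s v h => RS s v h)]
    exact Finset.sum_congr rfl fun s _ => by rw [hDE s]
  have hA2 : (ES fun s => ∑ v, rho s v * ∑ h, Q s v h * RD v h)
      = ∑ t : ι, wgt t * RD t.2.1 t.2.2 := by
    rw [hES, reindexQ (fun s v h => RD v h)]
  -- Jensen's inequality
  have hJ : f (∑ t : ι, wgt t * RS t.1 t.2.1 t.2.2) (∑ t : ι, wgt t * RD t.2.1 t.2.2)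
      ≤ ∑ t : ι, wgt t * f (RS t.1 t.2.1 t.2.2) (RD t.2.1 t.2.2) := by
    set pt : ι → ℝ × ℝ := fun t => (RS t.1 t.2.1 t.2.2, RD t.2.1 t.2.2) with hptd
    have hmem : ∀ t ∈ (Finset.univ : Finset ι),
        pt t ∈ (Set.Icc (0:ℝ) 1) ×ˢ (Set.Icc (0:ℝ) 1) := by
      rintro ⟨s, v, h⟩ _
      exact Set.mk_mem_prod (hRS01 s v h) (hRD01 v h)
    have h := hf.map_sum_le (fun t _ => hq0 t) hq1 hmem
    have h1 : (∑ t : ι, wgt t • pt t)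
        = (∑ t : ι, wgt t * (pt t).1, ∑ t : ι, wgt t * (pt t).2) := by
      apply Prod.ext <;> simp [Prod.fst_sum, Prod.snd_sum]
    rw [h1] at h
    simpa [smul_eq_mul] using h
  -- change of measure
  have hG := gibbs_ineq wgt pr
    (fun t => (m:ℝ) * f (RS t.1 t.2.1 t.2.2) (RD t.2.1 t.2.2)) hq0 hq1 hp0 hp1 habs
  have hfg : ∑ t : ι, wgt t * f (RS t.1 t.2.1 t.2.2) (RD t.2.1 t.2.2)
      = (1 / m) * ∑ t : ι, wgt t * ((m:ℝ) * f (RS t.1 t.2.1 t.2.2) (RD t.2.1 t.2.2)) := by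
    rw [Finset.mul_sum]
    refine Finset.sum_congr rfl fun t _ => ?_
    field_simp
  -- KL decomposition
  have hKL : ∑ t : ι, wgt t * Real.log (wgt t / pr t)
      = (∑ t : ι, wgt t * Real.log (Q t.1 t.2.1 t.2.2 / P t.2.1 t.2.2))
        + ∑ t : ι, wgt t * Real.log (rho t.1 t.2.1 / pi t.2.1) := by
    rw [← Finset.sum_add_distrib]
    refine Finset.sum_congr rfl fun t _ => ?_
    obtain ⟨s, v, h⟩ := t
    simp only [hwgt, hpr]
    by_cases hWs : W s = 0
    · simp [hWs]
    by_cases hrv : rho s v = 0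
    · simp [hrv]
    by_cases hQh : Q s v h = 0
    · simp [hQh]
    have hWpos : 0 < W s := (hW0 s).lt_of_ne (Ne.symm hWs)
    have hrpos : 0 < rho s v := (hrho0 s v).lt_of_ne (Ne.symm hrv)
    have hQpos : 0 < Q s v h := (hQ0 s v h).lt_of_ne (Ne.symm hQh)
    have hppos : 0 < pi v := by
      rcases (hpi0 v).eq_or_lt with hp | hp
      · exact absurd (hrp s v hp.symm) hrv
      · exact hp
    have hPpos : 0 < P v h := by
      rcases (hP0 v h).eq_or_lt with hp | hp
      · exact absurd (hQP s v h hp.symm) hQh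
      · exact hp
    have hratio : (W s * rho s v * Q s v h) / (W s * pi v * P v h)
        = (Q s v h / P v h) * (rho s v / pi v) := by
      field_simp
    rw [hratio, Real.log_mul (by positivity) (by positivity)]
    ring
  -- identify the KL terms with their ES forms
  have hK1 : (ES fun s => ∑ v, rho s v * ∑ h, Q s v h * Real.log (Q s v h / P v h))
      = ∑ t : ι, wgt t * Real.log (Q t.1 t.2.1 t.2.2 / P t.2.1 t.2.2) := by
    rw [hES, reindexQ (fun s v h => Real.log (Q s v h / P v h))]
  have hc : ∀ s v, ∑ h, Q s v h * Real.log (rho s v / pi v)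
      = Real.log (rho s v / pi v) := fun s v => by
    rw [← Finset.sum_mul, hQ1 s v, one_mul]
  have hK2 : (ES fun s => ∑ v, rho s v * Real.log (rho s v / pi v))
      = ∑ t : ι, wgt t * Real.log (rho t.1 t.2.1 / pi t.2.1) := by
    have h := reindexQ (fun s v _h => Real.log (rho s v / pi v))
    simp only [hc] at h
    rw [hES, h]
  have hT : (ES fun s => ∑ v, pi v * ∑ h, P v h * Real.exp (m * f (RS s v h) (RD v h)))
      = ∑ t : ι, pr t *
          Real.exp ((m:ℝ) * f (RS t.1 t.2.1 t.2.2) (RD t.2.1 t.2.2)) := by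
    rw [hES, reindexP (fun s v h => Real.exp ((m:ℝ) * f (RS s v h) (RD v h)))]
  -- assemble
  rw [hA1, hA2, hK1, hK2, hT]
  calc f (∑ t : ι, wgt t * RS t.1 t.2.1 t.2.2) (∑ t : ι, wgt t * RD t.2.1 t.2.2)
      ≤ ∑ t : ι, wgt t * f (RS t.1 t.2.1 t.2.2) (RD t.2.1 t.2.2) := hJ
    _ = (1 / m) * ∑ t : ι, wgt t *
          ((m:ℝ) * f (RS t.1 t.2.1 t.2.2) (RD t.2.1 t.2.2)) := hfg
    _ ≤ (1 / m) *
        ((∑ t : ι, wgt t * Real.log (Q t.1 t.2.1 t.2.2 / P t.2.1 t.2.2))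
          + (∑ t : ι, wgt t * Real.log (rho t.1 t.2.1 / pi t.2.1))
          + Real.log (∑ t : ι, pr t *
              Real.exp ((m:ℝ) * f (RS t.1 t.2.1 t.2.2) (RD t.2.1 t.2.2)))) := by
        apply mul_le_mul_of_nonneg_left _ (by positivity)
        rw [← hKL] at *
        calc ∑ t : ι, wgt t * ((m:ℝ) * f (RS t.1 t.2.1 t.2.2) (RD t.2.1 t.2.2))
            ≤ (∑ t : ι, wgt t * Real.log (wgt t / pr t))
              + Real.log (∑ t : ι, pr t *
                  Real.exp ((m:ℝ) * f (RS t.1 t.2.1 t.2.2) (RD t.2.1 t.2.2))) := hG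
          _ = _ := by rw [hKL]
end

section
/- Multiview Catoni-like corollary: for any C > 0, E_S R_D(G_{ρ_S}^MV) ≤ (1/(1−e^{−C})) [ 1 − exp( −( C · E_S R_S(G_{ρ_S}^MV) + (1/m)( E_S E_{v∼ρ_S} KL(Q_{v,S}‖P_v) + E_S KL(ρ_S‖π) ) ) ) ]. -/
open Finset Real

lemma gibbs_dv {ι : Type*} [Fintype ι] (μ ν f : ι → ℝ)
    (hμ0 : ∀ i, 0 ≤ μ i) (hν0 : ∀ i, 0 ≤ ν i) (hν1 : ∑ i, ν i = 1)
    (habs : ∀ i, μ i = 0 → ν i = 0)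
    (hmom : ∑ i, μ i * Real.exp (f i) ≤ 1) :
    ∑ i, ν i * f i ≤ ∑ i, ν i * Real.log (ν i / μ i) := by
  classical
  set T : Finset ι := Finset.univ.filter (fun i => ν i ≠ 0) with hT
  have hmemT : ∀ i ∈ T, 0 < ν i := by
    intro i hi
    rw [hT, Finset.mem_filter] at hi
    exact lt_of_le_of_ne (hν0 i) (Ne.symm hi.2)
  have hμT : ∀ i ∈ T, 0 < μ i := by
    intro i hi
    rcases eq_or_lt_of_le (hμ0 i) with h | h
    · exact absurd (habs i h.symm) (Finset.mem_filter.mp hi).2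
    · exact h
  have hsumT : ∑ i ∈ T, ν i = 1 := by
    rw [hT, Finset.sum_filter_ne_zero, hν1]
  have key : ∑ i ∈ T, ν i * (f i - Real.log (ν i / μ i)) ≤ 0 := by
    have heq : ∀ i ∈ T, f i - Real.log (ν i / μ i)
        = Real.log (μ i * Real.exp (f i) / ν i) := by
      intro i hi
      have hν := hmemT i hi; have hμ := hμT i hi
      rw [Real.log_div (by positivity) hν.ne',
        Real.log_mul hμ.ne' (Real.exp_pos _).ne', Real.log_exp,
        Real.log_div hν.ne' hμ.ne']
      ring
    have hsimp : ∑ i ∈ T, ν i • (μ i * Real.exp (f i) / ν i)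
        = ∑ i ∈ T, μ i * Real.exp (f i) := by
      refine Finset.sum_congr rfl fun i hi => ?_
      have hν := hmemT i hi
      rw [smul_eq_mul, mul_comm, div_mul_cancel₀ _ hν.ne']
    calc ∑ i ∈ T, ν i * (f i - Real.log (ν i / μ i))
        = ∑ i ∈ T, ν i • Real.log (μ i * Real.exp (f i) / ν i) := by
          refine Finset.sum_congr rfl fun i hi => ?_
          rw [heq i hi, smul_eq_mul]
      _ ≤ Real.log (∑ i ∈ T, ν i • (μ i * Real.exp (f i) / ν i)) := by
          refine strictConcaveOn_log_Ioi.concaveOn.le_map_sum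
            (fun i hi => (hmemT i hi).le) hsumT (fun i hi => ?_)
          have h1 := hmemT i hi; have h2 := hμT i hi
          have h3 := Real.exp_pos (f i)
          exact Set.mem_Ioi.mpr (by positivity)
      _ ≤ 0 := by
          apply Real.log_nonpos
          · rw [hsimp]
            exact Finset.sum_nonneg fun i _ => by
              have h := hμ0 i; positivity
          · rw [hsimp]
            refine le_trans (Finset.sum_le_sum_of_subset_of_nonneg
              (Finset.subset_univ T) (fun i _ _ => by
                have h := hμ0 i; positivity)) hmom
  have hrestrict : ∑ i, ν i * (f i - Real.log (ν i / μ i))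
      = ∑ i ∈ T, ν i * (f i - Real.log (ν i / μ i)) := by
    refine (Finset.sum_subset (Finset.subset_univ T) fun i _ hi => ?_).symm
    have : ν i = 0 := by
      by_contra h
      exact hi (Finset.mem_filter.mpr ⟨Finset.mem_univ i, h⟩)
    rw [this, zero_mul]
  have := hrestrict ▸ key
  have hsub : ∑ i, ν i * (f i - Real.log (ν i / μ i))
      = ∑ i, ν i * f i - ∑ i, ν i * Real.log (ν i / μ i) := by
    rw [← Finset.sum_sub_distrib]
    exact Finset.sum_congr rfl fun i _ => by ring
  linarith [hsub ▸ this]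


/-- Multiview Catoni-like corollary: for any `C > 0`,
`E_S R_D(G_{ρ_S}^MV) ≤ (1/(1−e^{−C})) [ 1 − exp(−(C · E_S R_S(G_{ρ_S}^MV)
  + (1/m)(E_S E_{v∼ρ_S} KL(Q_{v,S}‖P_v) + E_S KL(ρ_S‖π)))) ]`.
Same multiview setting as the multiview general PAC-Bayesian expectation
theorem; `E_S R_S(G_{ρ_S}^MV) = E_S[(1/2) d_S^MV(ρ_S) + e_S^MV(ρ_S)]` is the
expected empirical multiview Gibbs risk. -/
theorem multiview_catoni_bound
    {V : Type*} [Fintype V] [DecidableEq V]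
    (X : V → Type*) [∀ v, Fintype (X v)]
    (H : V → Type*) [∀ v, Fintype (H v)]
    (m : ℕ) (hm : 0 < m)
    (w : ∀ v, H v → X v → ℝ) (hw : ∀ v h x, w v h x = 1 ∨ w v h x = -1)
    (D : (∀ v, X v) × Bool → ℝ) (hD0 : ∀ z, 0 ≤ D z) (hD1 : ∑ z, D z = 1)
    (P : ∀ v, H v → ℝ) (hP0 : ∀ v h, 0 ≤ P v h) (hP1 : ∀ v, ∑ h, P v h = 1)
    (pi : V → ℝ) (hpi0 : ∀ v, 0 ≤ pi v) (hpi1 : ∑ v, pi v = 1)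
    (Q : (Fin m → (∀ v, X v) × Bool) → ∀ v, H v → ℝ)
    (hQ0 : ∀ s v h, 0 ≤ Q s v h) (hQ1 : ∀ s v, ∑ h, Q s v h = 1)
    (hQP : ∀ s v h, P v h = 0 → Q s v h = 0)
    (rho : (Fin m → (∀ v, X v) × Bool) → V → ℝ)
    (hrho0 : ∀ s v, 0 ≤ rho s v) (hrho1 : ∀ s, ∑ v, rho s v = 1)
    (hrp : ∀ s v, pi v = 0 → rho s v = 0)
    (C : ℝ) (hC : 0 < C) :
    -- error indicator of voter h (of view v) on example z :
    let err : ∀ v, H v → (∀ v, X v) × Bool → ℝ := fun v h z =>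
      if w v h (z.1 v) = (if z.2 then (1 : ℝ) else -1) then 0 else 1
    -- true and empirical risks of a voter :
    let RD : ∀ v, H v → ℝ := fun v h => ∑ z, D z * err v h z
    let RS : (Fin m → (∀ v, X v) × Bool) → ∀ v, H v → ℝ := fun s v h =>
      (∑ i, err v h (s i)) / m
    -- expectation over samples S ∼ D^m :
    let ES : ((Fin m → (∀ v, X v) × Bool) → ℝ) → ℝ := fun g =>
      ∑ s : Fin m → (∀ v, X v) × Bool, (∏ i, D (s i)) * g s
    (ES fun s => ∑ v, rho s v * ∑ h, Q s v h * RD v h)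
      ≤ (1 / (1 - Real.exp (-C))) *
        (1 - Real.exp (-(C * (ES fun s => ∑ v, rho s v * ∑ h, Q s v h * RS s v h)
          + (1 / m) *
            ((ES fun s => ∑ v, rho s v * ∑ h, Q s v h * Real.log (Q s v h / P v h))
              + (ES fun s => ∑ v, rho s v * Real.log (rho s v / pi v)))))) := by
  intro err RD RS ES
  classical
  have hm' : (0:ℝ) < m := by exact_mod_cast hm
  have hRS_eq : ∀ s v h, RS s v h = (∑ i, err v h (s i)) / m := fun _ _ _ => rfl
  have hES_eq : ∀ g, ES g = ∑ s : Fin m → (∀ v, X v) × Bool, (∏ i, D (s i)) * g s :=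
    fun _ => rfl
  set a : ℝ := 1 - Real.exp (-C) with ha_def
  have hexpC : Real.exp (-C) < 1 := Real.exp_lt_one_iff.mpr (by linarith)
  have ha : 0 < a := by simp only [ha_def]; linarith
  have ha1 : a < 1 := by have := Real.exp_pos (-C); simp only [ha_def]; linarith
  have herr01 : ∀ v h z, err v h z = 0 ∨ err v h z = 1 := by
    intro v h z
    by_cases hx : w v h (z.1 v) = (if z.2 then (1:ℝ) else -1) <;> simp [err, hx]
  have herr0 : ∀ v h z, 0 ≤ err v h z := fun v h z => by
    rcases herr01 v h z with h' | h' <;> rw [h'] <;> norm_num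
  have herr1 : ∀ v h z, err v h z ≤ 1 := fun v h z => by
    rcases herr01 v h z with h' | h' <;> rw [h'] <;> norm_num
  have hRD0 : ∀ v h, 0 ≤ RD v h := fun v h =>
    Finset.sum_nonneg fun z _ => mul_nonneg (hD0 z) (herr0 v h z)
  have hRD1 : ∀ v h, RD v h ≤ 1 := by
    intro v h
    calc RD v h ≤ ∑ z, D z := Finset.sum_le_sum fun z _ => by
          nlinarith [herr1 v h z, hD0 z, herr0 v h z]
      _ = 1 := hD1
  have h1ap : ∀ v h, 0 < 1 - a * RD v h := fun v h => by
    nlinarith [hRD0 v h, hRD1 v h]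
  set Fp : ∀ v, H v → ℝ := fun v h => -Real.log (1 - a * RD v h) with hFp_def
  set ν : (Fin m → (∀ v, X v) × Bool) × (Σ v, H v) → ℝ :=
    fun p => (∏ i, D (p.1 i)) * (rho p.1 p.2.1 * Q p.1 p.2.1 p.2.2) with hν_def
  set μ : (Fin m → (∀ v, X v) × Bool) × (Σ v, H v) → ℝ :=
    fun p => (∏ i, D (p.1 i)) * (pi p.2.1 * P p.2.1 p.2.2) with hμ_def
  set f : (Fin m → (∀ v, X v) × Bool) × (Σ v, H v) → ℝ :=
    fun p => ∑ i, (Fp p.2.1 p.2.2 - C * err p.2.1 p.2.2 (p.1 i)) with hf_def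
  have hν0 : ∀ p, 0 ≤ ν p := fun p =>
    mul_nonneg (Finset.prod_nonneg fun i _ => hD0 _)
      (mul_nonneg (hrho0 _ _) (hQ0 _ _ _))
  have hμ0 : ∀ p, 0 ≤ μ p := fun p =>
    mul_nonneg (Finset.prod_nonneg fun i _ => hD0 _)
      (mul_nonneg (hpi0 _) (hP0 _ _))
  have habs : ∀ p, μ p = 0 → ν p = 0 := by
    intro p h
    simp only [hμ_def, mul_eq_zero] at h
    simp only [hν_def, mul_eq_zero]
    rcases h with h | h | h
    · exact Or.inl h
    · exact Or.inr (Or.inl (hrp p.1 p.2.1 h))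
    · exact Or.inr (Or.inr (hQP p.1 p.2.1 p.2.2 h))
  -- sum over samples of the product measure is 1
  have hDm : ∑ s : Fin m → (∀ v, X v) × Bool, ∏ i, D (s i) = 1 := by
    rw [← Fintype.piFinset_univ, ← Finset.prod_univ_sum]
    simp [hD1]
  -- generic expansion of sums over the big index type
  have hexp : ∀ g : (Fin m → (∀ v, X v) × Bool) → (Σ v, H v) → ℝ,
      (∑ p : (Fin m → (∀ v, X v) × Bool) × (Σ v, H v), ν p * g p.1 p.2)
      = ES (fun s => ∑ v, rho s v * ∑ h, Q s v h * g s ⟨v, h⟩) := by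
    intro g
    rw [hES_eq, Fintype.sum_prod_type]
    refine Finset.sum_congr rfl fun s _ => ?_
    rw [← Finset.univ_sigma_univ, Finset.sum_sigma, Finset.mul_sum]
    refine Finset.sum_congr rfl fun v _ => ?_
    rw [Finset.mul_sum, Finset.mul_sum]
    refine Finset.sum_congr rfl fun h _ => ?_
    simp only [hν_def]
    ring
  have hν1 : ∑ p, ν p = 1 := by
    rw [Fintype.sum_prod_type]
    have hs : ∀ s, ∑ σ : Σ v, H v, ν (s, σ) = ∏ i, D (s i) := by
      intro s
      rw [← Finset.univ_sigma_univ, Finset.sum_sigma]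
      simp only [hν_def]
      have hv : ∀ v, ∑ h, (∏ i, D (s i)) * (rho s v * Q s v h)
          = (∏ i, D (s i)) * rho s v := by
        intro v
        rw [← Finset.mul_sum, ← Finset.mul_sum, hQ1, mul_one]
      rw [Finset.sum_congr rfl fun v _ => hv v, ← Finset.mul_sum, hrho1, mul_one]
    simp only [hs, hDm]
  -- the exponential moment equals one
  have hfac : ∀ (v : V) (h : H v), ∑ z, D z * Real.exp (Fp v h - C * err v h z) = 1 := by
    intro v h
    have hinv : Real.exp (Fp v h) = (1 - a * RD v h)⁻¹ := by
      simp only [hFp_def]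
      rw [Real.exp_neg, Real.exp_log (h1ap v h)]
    have hterm : ∀ z, Real.exp (Fp v h - C * err v h z)
        = (1 - a * RD v h)⁻¹ * (1 - a * err v h z) := by
      intro z
      rw [sub_eq_add_neg, Real.exp_add, hinv]
      congr 1
      rcases herr01 v h z with h' | h' <;> rw [h'] <;> simp [ha_def]
    calc ∑ z, D z * Real.exp (Fp v h - C * err v h z)
        = ∑ z, (1 - a * RD v h)⁻¹ * (D z - a * (D z * err v h z)) := by
          refine Finset.sum_congr rfl fun z _ => ?_
          rw [hterm z]; ring
      _ = (1 - a * RD v h)⁻¹ * (1 - a * RD v h) := by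
          rw [← Finset.mul_sum, Finset.sum_sub_distrib, hD1, ← Finset.mul_sum]
      _ = 1 := inv_mul_cancel₀ (h1ap v h).ne'
  have hmom : ∑ p, μ p * Real.exp (f p) ≤ 1 := by
    have hcalc : ∑ p, μ p * Real.exp (f p)
        = ∑ σ : Σ v, H v, (pi σ.1 * P σ.1 σ.2) *
            ∑ s : Fin m → (∀ v, X v) × Bool,
              ∏ i, (D (s i) * Real.exp (Fp σ.1 σ.2 - C * err σ.1 σ.2 (s i))) := by
      rw [Fintype.sum_prod_type, Finset.sum_comm]
      refine Finset.sum_congr rfl fun σ _ => ?_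
      rw [Finset.mul_sum]
      refine Finset.sum_congr rfl fun s _ => ?_
      simp only [hμ_def, hf_def]
      rw [Real.exp_sum, Finset.prod_mul_distrib]
      ring
    rw [hcalc]
    have hinner : ∀ σ : Σ v, H v,
        (∑ s : Fin m → (∀ v, X v) × Bool,
          ∏ i, (D (s i) * Real.exp (Fp σ.1 σ.2 - C * err σ.1 σ.2 (s i)))) = 1 := by
      intro σ
      have h1 := Finset.prod_univ_sum (fun _ : Fin m => (Finset.univ : Finset ((∀ v, X v) × Bool)))
        (fun _ z => D z * Real.exp (Fp σ.1 σ.2 - C * err σ.1 σ.2 z))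
      rw [Fintype.piFinset_univ] at h1
      rw [← h1]
      simp [hfac σ.1 σ.2]
    refine le_of_eq ?_
    calc ∑ σ : Σ v, H v, (pi σ.1 * P σ.1 σ.2) *
            (∑ s : Fin m → (∀ v, X v) × Bool,
              ∏ i, (D (s i) * Real.exp (Fp σ.1 σ.2 - C * err σ.1 σ.2 (s i))))
        = ∑ σ : Σ v, H v, pi σ.1 * P σ.1 σ.2 := by
          refine Finset.sum_congr rfl fun σ _ => ?_
          rw [hinner σ, mul_one]
      _ = ∑ v, ∑ h, pi v * P v h := by
          rw [← Finset.univ_sigma_univ, Finset.sum_sigma]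
      _ = 1 := by
          simp only [← Finset.mul_sum, hP1, mul_one, hpi1]
  -- the change of measure inequality
  have hDV := gibbs_dv μ ν f hμ0 hν0 hν1 habs hmom
  -- the main quantities
  set A : ℝ := ∑ p : (Fin m → (∀ v, X v) × Bool) × (Σ v, H v),
    ν p * RD p.2.1 p.2.2 with hA_def
  set B : ℝ := ∑ p : (Fin m → (∀ v, X v) × Bool) × (Σ v, H v),
    ν p * RS p.1 p.2.1 p.2.2 with hB_def
  set K1 : ℝ := ∑ p : (Fin m → (∀ v, X v) × Bool) × (Σ v, H v),
    ν p * Real.log (Q p.1 p.2.1 p.2.2 / P p.2.1 p.2.2) with hK1_def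
  set K2 : ℝ := ∑ p : (Fin m → (∀ v, X v) × Bool) × (Σ v, H v),
    ν p * Real.log (rho p.1 p.2.1 / pi p.2.1) with hK2_def
  set Φ : ℝ := ∑ p : (Fin m → (∀ v, X v) × Bool) × (Σ v, H v),
    ν p * Fp p.2.1 p.2.2 with hΦ_def
  have hf_closed : ∀ p : (Fin m → (∀ v, X v) × Bool) × (Σ v, H v),
      f p = (m:ℝ) * Fp p.2.1 p.2.2 - C * ((m:ℝ) * RS p.1 p.2.1 p.2.2) := by
    intro p
    simp only [hf_def]
    rw [Finset.sum_sub_distrib, Finset.sum_const, Finset.card_univ, Fintype.card_fin,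
      nsmul_eq_mul, ← Finset.mul_sum]
    have h2 : (m:ℝ) * RS p.1 p.2.1 p.2.2 = ∑ i, err p.2.1 p.2.2 (p.1 i) := by
      rw [hRS_eq]; field_simp
    rw [h2]
  have hsum_f : ∑ p, ν p * f p = (m:ℝ) * Φ - C * ((m:ℝ) * B) := by
    calc ∑ p, ν p * f p
        = ∑ p : (Fin m → (∀ v, X v) × Bool) × (Σ v, H v),
            ((m:ℝ) * (ν p * Fp p.2.1 p.2.2)
              - C * ((m:ℝ) * (ν p * RS p.1 p.2.1 p.2.2))) := by
          refine Finset.sum_congr rfl fun p _ => ?_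
          rw [hf_closed p]; ring
      _ = (m:ℝ) * Φ - C * ((m:ℝ) * B) := by
          rw [Finset.sum_sub_distrib, ← Finset.mul_sum, ← Finset.mul_sum, ← Finset.mul_sum]
  have hKsplit : ∑ p, ν p * Real.log (ν p / μ p) = K1 + K2 := by
    rw [hK1_def, hK2_def, ← Finset.sum_add_distrib]
    refine Finset.sum_congr rfl fun p _ => ?_
    by_cases hp : ν p = 0
    · rw [hp]; ring
    · have hfacts : (∏ i, D (p.1 i)) ≠ 0 ∧ rho p.1 p.2.1 ≠ 0 ∧ Q p.1 p.2.1 p.2.2 ≠ 0 := by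
        simpa [hν_def, mul_eq_zero, not_or] using hp
      obtain ⟨hPD, hr, hq⟩ := hfacts
      have hpi' : pi p.2.1 ≠ 0 := fun h => hr (hrp _ _ h)
      have hP' : P p.2.1 p.2.2 ≠ 0 := fun h => hq (hQP _ _ _ h)
      have hratio : ν p / μ p
          = (Q p.1 p.2.1 p.2.2 / P p.2.1 p.2.2) * (rho p.1 p.2.1 / pi p.2.1) := by
        simp only [hν_def, hμ_def]
        field_simp
      rw [hratio, Real.log_mul (div_ne_zero hq hP') (div_ne_zero hr hpi'), mul_add]
  have hΦle : Φ ≤ C * B + (1/(m:ℝ)) * (K1 + K2) := by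
    rw [hsum_f, hKsplit] at hDV
    have h3 : (m:ℝ) * (C * B + (1/(m:ℝ)) * (K1 + K2)) = C * ((m:ℝ) * B) + (K1 + K2) := by
      field_simp
    have h4 : (m:ℝ) * Φ ≤ (m:ℝ) * (C * B + (1/(m:ℝ)) * (K1 + K2)) := by
      rw [h3]; linarith
    exact le_of_mul_le_mul_left h4 hm'
  have hJ : Real.exp (-Φ) ≤ 1 - a * A := by
    have hnegΦ : -Φ = ∑ p : (Fin m → (∀ v, X v) × Bool) × (Σ v, H v),
        ν p • Real.log (1 - a * RD p.2.1 p.2.2) := by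
      rw [hΦ_def, ← Finset.sum_neg_distrib]
      refine Finset.sum_congr rfl fun p _ => ?_
      simp only [hFp_def, smul_eq_mul]
      ring
    calc Real.exp (-Φ)
        = Real.exp (∑ p : (Fin m → (∀ v, X v) × Bool) × (Σ v, H v),
            ν p • Real.log (1 - a * RD p.2.1 p.2.2)) := by rw [hnegΦ]
      _ ≤ ∑ p : (Fin m → (∀ v, X v) × Bool) × (Σ v, H v),
            ν p • Real.exp (Real.log (1 - a * RD p.2.1 p.2.2)) :=
          convexOn_exp.map_sum_le (fun p _ => hν0 p) hν1 (fun _ _ => Set.mem_univ _)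
      _ = ∑ p : (Fin m → (∀ v, X v) × Bool) × (Σ v, H v),
            (ν p - a * (ν p * RD p.2.1 p.2.2)) := by
          refine Finset.sum_congr rfl fun p _ => ?_
          rw [smul_eq_mul, Real.exp_log (h1ap _ _)]; ring
      _ = 1 - a * A := by
          rw [Finset.sum_sub_distrib, hν1, ← Finset.mul_sum, ← hA_def]
  have hA_ES : A = ES (fun s => ∑ v, rho s v * ∑ h, Q s v h * RD v h) := by
    rw [hA_def]; exact hexp (fun s σ => RD σ.1 σ.2)
  have hB_ES : B = ES (fun s => ∑ v, rho s v * ∑ h, Q s v h * RS s v h) := by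
    rw [hB_def]; exact hexp (fun s σ => RS s σ.1 σ.2)
  have hK1_ES : K1 = ES (fun s => ∑ v, rho s v * ∑ h, Q s v h * Real.log (Q s v h / P v h)) := by
    rw [hK1_def]; exact hexp (fun s σ => Real.log (Q s σ.1 σ.2 / P σ.1 σ.2))
  have hK2_ES : K2 = ES (fun s => ∑ v, rho s v * Real.log (rho s v / pi v)) := by
    rw [hK2_def]
    have h1 : (∑ p : (Fin m → (∀ v, X v) × Bool) × (Σ v, H v),
        ν p * Real.log (rho p.1 p.2.1 / pi p.2.1))
        = ES (fun s => ∑ v, rho s v * ∑ h, Q s v h * Real.log (rho s v / pi v)) :=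
      hexp (fun s σ => Real.log (rho s σ.1 / pi σ.1))
    rw [h1, hES_eq, hES_eq]
    refine Finset.sum_congr rfl fun s _ => ?_
    congr 1
    refine Finset.sum_congr rfl fun v _ => ?_
    congr 1
    rw [← Finset.sum_mul, hQ1, one_mul]
  rw [← hA_ES, ← hB_ES, ← hK1_ES, ← hK2_ES]
  have ht : Real.exp (-(C * B + 1/(m:ℝ) * (K1 + K2))) ≤ 1 - a * A :=
    le_trans (Real.exp_le_exp.mpr (neg_le_neg hΦle)) hJ
  rw [div_mul_eq_mul_div, one_mul, le_div_iff₀ ha]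
  linarith [ht]
end
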